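/- arXiv:1807.04523 — 3 statements merged into one kernel-verified Lean document; each statement's English description precedes it below -/
import Mathlib

section
/- Let m ≥ 2, let s ∈ Σ, let N = (N_n)_{n≥0} be a sequence of positive integers, and let t ∈ Σ_N(s). Then (s,t) is a Li-Yorke pair for the shift σ on Σ; that is, liminf_{n→∞} dist(σⁿ s, σⁿ t) = 0 and limsup_{n→∞} dist(σⁿ s, σⁿ t) > 0. -/
open Filter Set

noncomputable section

/-- The shift map on one-sided sequences over the alphabet `{1,…,m}` (modelled as `Fin m`,
indices starting at `0` corresponding to the paper's index `1`). -/
def shiftMap {m : ℕ} (s : ℕ → Fin m) : ℕ → Fin m := fun k => s (k + 1)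

/-- Addition of `1` modulo `m` on a digit. -/
def succDigit {m : ℕ} (x : Fin m) : Fin m :=
  ⟨(x.val + 1) % m, Nat.mod_lt _ ((Nat.zero_le _).trans_lt x.isLt)⟩

/-- The sequence `u` with `u 0 = 0` (the paper's `u_0 = 1`, shifted to `0`-based indexing)
and `u (i+1) = u i + N i + i + 2`. -/
def uSeq (N : ℕ → ℕ) : ℕ → ℕ
  | 0 => 0
  | i + 1 => uSeq N i + N i + i + 2

/-- The set `Σ_N(s)` of sequences `t` that agree with `s` on the blocks
`{u_i, …, u_i + i}`, have `t_{u_i+i+1} = s_{u_i+i+1} + 1 (mod m)`, and are arbitrary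
elsewhere. -/
def sigmaSet {m : ℕ} (s : ℕ → Fin m) (N : ℕ → ℕ) : Set (ℕ → Fin m) :=
  {t | ∀ i : ℕ,
    (∀ k : ℕ, uSeq N i ≤ k → k ≤ uSeq N i + i → t k = s k) ∧
    t (uSeq N i + i + 1) = succDigit (s (uSeq N i + i + 1))}

/-- The metric `dist(s,t) = Σ_{k≥1} m^{-k} |s_k − t_k|` on one-sided sequences
(with `0`-based indexing, position `k` carries the weight `m^{-(k+1)}`). -/
def seqDist {m : ℕ} (s t : ℕ → Fin m) : ℝ :=
  ∑' k : ℕ, (1 / (m : ℝ)) ^ (k + 1) * |((s k : ℕ) : ℝ) - ((t k : ℕ) : ℝ)|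

namespace LiYorkeAux

lemma shiftMap_iterate {m : ℕ} (s : ℕ → Fin m) (n k : ℕ) :
    shiftMap^[n] s k = s (k + n) := by
  induction n generalizing s k with
  | zero => rfl
  | succ n ih =>
    rw [Function.iterate_succ_apply, ih (shiftMap s) k]
    rfl

variable {m : ℕ}

lemma abs_diff_le (a b : Fin m) : |((a : ℕ) : ℝ) - ((b : ℕ) : ℝ)| ≤ m := by
  have ha : ((a : ℕ) : ℝ) < m := by exact_mod_cast a.isLt
  have hb : ((b : ℕ) : ℝ) < m := by exact_mod_cast b.isLt
  have ha0 : (0 : ℝ) ≤ ((a : ℕ) : ℝ) := Nat.cast_nonneg _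
  have hb0 : (0 : ℝ) ≤ ((b : ℕ) : ℝ) := Nat.cast_nonneg _
  rw [abs_sub_le_iff]
  constructor <;> linarith

lemma hm0 (hm : 2 ≤ m) : (0 : ℝ) < m := by
  have : (2 : ℝ) ≤ m := by exact_mod_cast hm
  linarith

lemma hr1 (hm : 2 ≤ m) : 1 / (m : ℝ) < 1 := by
  rw [div_lt_one (hm0 hm)]
  have : (2 : ℝ) ≤ m := by exact_mod_cast hm
  linarith

lemma summable_term (hm : 2 ≤ m) (x y : ℕ → Fin m) :
    Summable (fun k : ℕ =>
      (1 / (m : ℝ)) ^ (k + 1) * |((x k : ℕ) : ℝ) - ((y k : ℕ) : ℝ)|) := by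
  have h0 := hm0 hm
  refine Summable.of_nonneg_of_le (fun k => by positivity) (fun k => ?_)
    (summable_geometric_of_lt_one (by positivity) (hr1 hm))
  calc (1 / (m : ℝ)) ^ (k + 1) * |((x k : ℕ) : ℝ) - ((y k : ℕ) : ℝ)|
      ≤ (1 / (m : ℝ)) ^ (k + 1) * m :=
        mul_le_mul_of_nonneg_left (abs_diff_le _ _) (by positivity)
    _ = (1 / (m : ℝ)) ^ k := by
        rw [pow_succ]
        field_simp

lemma seqDist_nonneg (x y : ℕ → Fin m) : 0 ≤ seqDist x y :=
  tsum_nonneg fun k => by positivity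

lemma seqDist_le_two (hm : 2 ≤ m) (x y : ℕ → Fin m) : seqDist x y ≤ 2 := by
  have h0 := hm0 hm
  have hsum := summable_term hm x y
  have hg : Summable (fun k : ℕ => (1 / (m : ℝ)) ^ k) :=
    summable_geometric_of_lt_one (by positivity) (hr1 hm)
  have hle : seqDist x y ≤ ∑' k : ℕ, (1 / (m : ℝ)) ^ k := by
    refine Summable.tsum_le_tsum (fun k => ?_) hsum hg
    calc (1 / (m : ℝ)) ^ (k + 1) * |((x k : ℕ) : ℝ) - ((y k : ℕ) : ℝ)|
        ≤ (1 / (m : ℝ)) ^ (k + 1) * m :=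
          mul_le_mul_of_nonneg_left (abs_diff_le _ _) (by positivity)
      _ = (1 / (m : ℝ)) ^ k := by rw [pow_succ]; field_simp
  have hts : ∑' k : ℕ, (1 / (m : ℝ)) ^ k = (1 - 1 / (m : ℝ))⁻¹ :=
    tsum_geometric_of_lt_one (by positivity) (hr1 hm)
  have hm2 : (2 : ℝ) ≤ m := by exact_mod_cast hm
  have h12 : 1 / (m : ℝ) ≤ 1 / 2 := by
    apply one_div_le_one_div_of_le <;> linarith
  have hhalf : (1 / 2 : ℝ) ≤ 1 - 1 / (m : ℝ) := by linarith
  have : (1 - 1 / (m : ℝ))⁻¹ ≤ (1 / 2 : ℝ)⁻¹ :=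
    inv_anti₀ (by norm_num) hhalf
  rw [hts] at hle
  calc seqDist x y ≤ (1 - 1 / (m : ℝ))⁻¹ := hle
    _ ≤ (1 / 2 : ℝ)⁻¹ := this
    _ = 2 := by norm_num

lemma seqDist_rec (hm : 2 ≤ m) (x y : ℕ → Fin m) :
    seqDist x y = (1 / (m : ℝ)) * |((x 0 : ℕ) : ℝ) - ((y 0 : ℕ) : ℝ)|
      + (1 / (m : ℝ)) * seqDist (shiftMap x) (shiftMap y) := by
  have hsum := summable_term hm x y
  unfold seqDist
  rw [Summable.tsum_eq_zero_add hsum]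
  congr 1
  · rw [pow_one]
  · have heq : (fun k : ℕ =>
        (1 / (m : ℝ)) ^ (k + 1 + 1) * |((x (k + 1) : ℕ) : ℝ) - ((y (k + 1) : ℕ) : ℝ)|)
        = fun k : ℕ => (1 / (m : ℝ)) *
          ((1 / (m : ℝ)) ^ (k + 1) *
            |((shiftMap x k : ℕ) : ℝ) - ((shiftMap y k : ℕ) : ℝ)|) := by
      funext k
      simp only [shiftMap]
      ring
    rw [heq, tsum_mul_left]

lemma seqDist_le_of_agree (hm : 2 ≤ m) :
    ∀ (n : ℕ) (x y : ℕ → Fin m), (∀ k < n, x k = y k) →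
      seqDist x y ≤ (1 / (m : ℝ)) ^ n * 2 := by
  intro n
  induction n with
  | zero => intro x y _; simpa using seqDist_le_two hm x y
  | succ n ih =>
    intro x y h
    have h0 : x 0 = y 0 := h 0 (Nat.succ_pos n)
    have hsh : ∀ k < n, shiftMap x k = shiftMap y k := fun k hk =>
      h (k + 1) (by omega)
    have hb := ih (shiftMap x) (shiftMap y) hsh
    have hr : (0 : ℝ) ≤ 1 / (m : ℝ) := by positivity
    rw [seqDist_rec hm, h0, sub_self, abs_zero, mul_zero, zero_add]
    calc (1 / (m : ℝ)) * seqDist (shiftMap x) (shiftMap y)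
        ≤ (1 / (m : ℝ)) * ((1 / (m : ℝ)) ^ n * 2) :=
          mul_le_mul_of_nonneg_left hb hr
      _ = (1 / (m : ℝ)) ^ (n + 1) * 2 := by ring

lemma first_le_seqDist (hm : 2 ≤ m) (x y : ℕ → Fin m) :
    (1 / (m : ℝ)) * |((x 0 : ℕ) : ℝ) - ((y 0 : ℕ) : ℝ)| ≤ seqDist x y := by
  have h := seqDist_rec hm x y
  have h1 : (0 : ℝ) ≤ (1 / (m : ℝ)) * seqDist (shiftMap x) (shiftMap y) := by
    have := seqDist_nonneg (shiftMap x) (shiftMap y)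
    positivity
  linarith

lemma one_le_abs_succDigit (hm : 2 ≤ m) (a : Fin m) :
    1 ≤ |((a : ℕ) : ℝ) - (((succDigit a : Fin m) : ℕ) : ℝ)| := by
  have hne : (a : ℕ) ≠ ((succDigit a : Fin m) : ℕ) := by
    simp only [succDigit]
    have hlt := a.isLt
    rcases Nat.lt_or_ge ((a : ℕ) + 1) m with h | h
    · rw [Nat.mod_eq_of_lt h]; omega
    · have he : (a : ℕ) + 1 = m := by omega
      rw [he, Nat.mod_self]; omega
  have hz : ((a : ℕ) : ℤ) - (((succDigit a : Fin m) : ℕ) : ℤ) ≠ 0 := by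
    intro h
    apply hne
    omega
  have h1 : (1 : ℤ) ≤ |((a : ℕ) : ℤ) - (((succDigit a : Fin m) : ℕ) : ℤ)| :=
    Int.one_le_abs hz
  have : ((1 : ℤ) : ℝ) ≤ ((|((a : ℕ) : ℤ) - (((succDigit a : Fin m) : ℕ) : ℤ)| : ℤ) : ℝ) :=
    Int.cast_le.2 h1
  rw [Int.cast_abs] at this
  push_cast at this
  exact_mod_cast this

lemma le_uSeq (N : ℕ → ℕ) : ∀ i, i ≤ uSeq N i := by
  intro i
  induction i with
  | zero => simp [uSeq]
  | succ i ih => simp only [uSeq]; omega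

lemma strictMono_uSeq (N : ℕ → ℕ) : StrictMono (uSeq N) := by
  apply strictMono_nat_of_lt_succ
  intro n
  simp only [uSeq]
  omega

end LiYorkeAux

open LiYorkeAux in
/-- For `m ≥ 2`, `s ∈ Σ`, a sequence `N` of positive integers and
`t ∈ Σ_N(s)`, the pair `(s, t)` is a Li-Yorke pair for the shift `σ` on `Σ`:
`liminf_{n→∞} dist(σⁿ s, σⁿ t) = 0` and `limsup_{n→∞} dist(σⁿ s, σⁿ t) > 0`. -/
theorem liYorke_pair_of_mem_sigmaSet (m : ℕ) (hm : 2 ≤ m) (s : ℕ → Fin m)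
    (N : ℕ → ℕ) (hN : ∀ n, 0 < N n) (t : ℕ → Fin m) (ht : t ∈ sigmaSet s N) :
    liminf (fun n : ℕ => seqDist (shiftMap^[n] s) (shiftMap^[n] t)) atTop = 0 ∧
    0 < limsup (fun n : ℕ => seqDist (shiftMap^[n] s) (shiftMap^[n] t)) atTop := by
  set f : ℕ → ℝ := fun n => seqDist (shiftMap^[n] s) (shiftMap^[n] t) with hf
  have hub : ∀ n, f n ≤ 2 := fun n => seqDist_le_two hm _ _
  have hlb : ∀ n, 0 ≤ f n := fun n => seqDist_nonneg _ _
  have hbdd_above : IsBoundedUnder (· ≤ ·) atTop f := isBoundedUnder_of ⟨2, hub⟩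
  have hbdd_below : IsBoundedUnder (· ≥ ·) atTop f := isBoundedUnder_of ⟨0, hlb⟩
  have hr0 : (0 : ℝ) ≤ 1 / (m : ℝ) := by positivity
  constructor
  · -- liminf = 0
    -- subsequence along uSeq N
    have hsub : ∀ i : ℕ, f (uSeq N i) ≤ (1 / (m : ℝ)) ^ (i + 1) * 2 := by
      intro i
      apply seqDist_le_of_agree hm
      intro k hk
      rw [shiftMap_iterate, shiftMap_iterate]
      exact ((ht i).1 (k + uSeq N i) (by omega) (by omega)).symm
    have htend0 : Tendsto (fun i : ℕ => (1 / (m : ℝ)) ^ (i + 1) * 2) atTop (nhds 0) := by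
      have h := tendsto_pow_atTop_nhds_zero_of_lt_one hr0 (hr1 hm)
      have h2 := (h.comp (tendsto_add_atTop_nat 1)).mul_const 2
      simpa using h2
    have htendsub : Tendsto (fun i => f (uSeq N i)) atTop (nhds 0) :=
      squeeze_zero (fun i => hlb _) hsub htend0
    have huT : Tendsto (uSeq N) atTop atTop := (strictMono_uSeq N).tendsto_atTop
    have hmap : map (uSeq N) atTop ≤ atTop := huT
    haveI : (map (uSeq N) atTop).NeBot := Filter.map_neBot
    have hcob : (map (uSeq N) atTop).IsCoboundedUnder (· ≥ ·) f :=
      Filter.IsBoundedUnder.isCoboundedUnder_ge (hbdd_above.mono hmap)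
    have h1 : liminf f atTop ≤ liminf f (map (uSeq N) atTop) :=
      liminf_le_liminf_of_le hmap hbdd_below hcob
    have h2 : liminf f (map (uSeq N) atTop) = 0 := by
      have : liminf f (map (uSeq N) atTop) = liminf (fun i => f (uSeq N i)) atTop := by
        rw [← Filter.liminf_comp]
        rfl
      rw [this]
      exact htendsub.liminf_eq
    have hle0 : liminf f atTop ≤ 0 := h2 ▸ h1
    have hge0 : 0 ≤ liminf f atTop :=
      le_liminf_of_le (hbdd_above.isCoboundedUnder_ge)
        (Eventually.of_forall hlb)
    linarith
  · -- limsup > 0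
    have hfreq : ∃ᶠ n in atTop, 1 / (m : ℝ) ≤ f n := by
      rw [frequently_atTop]
      intro a
      refine ⟨uSeq N a + a + 1, by have := le_uSeq N a; omega, ?_⟩
      set n := uSeq N a + a + 1
      have hx0 : shiftMap^[n] s 0 = s n := by rw [shiftMap_iterate]; norm_num
      have hy0 : shiftMap^[n] t 0 = t n := by rw [shiftMap_iterate]; norm_num
      have habs : 1 ≤ |((shiftMap^[n] s 0 : ℕ) : ℝ) - ((shiftMap^[n] t 0 : ℕ) : ℝ)| := by
        rw [hx0, hy0, (ht a).2]
        exact one_le_abs_succDigit hm (s n)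
      calc 1 / (m : ℝ) = (1 / (m : ℝ)) * 1 := by ring
        _ ≤ (1 / (m : ℝ)) * |((shiftMap^[n] s 0 : ℕ) : ℝ) - ((shiftMap^[n] t 0 : ℕ) : ℝ)| :=
            mul_le_mul_of_nonneg_left habs hr0
        _ ≤ f n := first_le_seqDist hm _ _
    have hlim : 1 / (m : ℝ) ≤ limsup f atTop :=
      le_limsup_of_frequently_le hfreq hbdd_above
    have : (0 : ℝ) < 1 / (m : ℝ) := by
      have := hm0 hm; positivity
    linarith

end
end

section
/- Let a > 1 and let t : ℝ → ℝ be the expansive tent map t(x) = a − 2a|x − 1/2|. Let Λ ⊆ ℝ be the attractor of the iterated function system T₁x = x/(2a), T₂x = 1 − x/(2a), i.e. the unique nonempty compact set with Λ = T₁(Λ) ∪ T₂(Λ). Then Λ is invariant under t and the Li-Yorke pairs of t in Λ have full Hausdorff dimension: dim_H LY_t(Λ) = dim_H(Λ × Λ) = 2·log 2 / log(2a). -/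
/-!
Put `r = (2a)⁻¹`. The coding map `α ↦ T_{α 0} (T_{α 1} (⋯))` sends `ℕ → Bool` into `Λ ⊆ [0, 1]`,
and `t` acts on codings as the shift. Two codings that first differ at index `k` are at distance
between `(1 - 2r) r ^ k` and `r ^ k`.

Upper bound: `Λ × Λ` is covered by `4 ^ n` images of itself under products of the contractions,
each of diameter at most `r ^ n` times that of `Λ × Λ`, so `dim_H (Λ × Λ) ≤ log 4 / log (2a)`.

Lower bound: for `(x, y) ∈ [0, 1)²` pair the coding of the binary digits of `x` with a companion
sequence that copies these digits on the blocks `[N 4 ^ j, N 4 ^ j + j)`, flips the digit at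
`N 4 ^ j + j`, and spells out the binary digits of `y` at all other positions. Long agreement
blocks and infinitely many flips make each such pair Li-Yorke. The blocks have density at most
`2 / N`, so pairs at distance about `r ^ m` come from points `(x, y)` that share about
`(1 - 2 / N) m` binary digits: the embedding of `[0, 1)²` has a Hölder inverse with exponent
close to `log 2 / log (2a)`, and `dim_H [0, 1)² = 2`.
-/

open Filter Set

noncomputable section

/-- The set of Li-Yorke pairs of a map `f` inside an invariant set `Λ`. -/
def liYorkePairs {E : Type*} [PseudoMetricSpace E] (f : E → E) (Λ : Set E) :
    Set (E × E) :=
  {p | p.1 ∈ Λ ∧ p.2 ∈ Λ ∧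
    liminf (fun n : ℕ => dist (f^[n] p.1) (f^[n] p.2)) atTop = 0 ∧
    0 < limsup (fun n : ℕ => dist (f^[n] p.1) (f^[n] p.2)) atTop}

open MeasureTheory Topology
open scoped NNReal ENNReal

section SelfSimilar

variable {X ι : Type*}

theorem Bornology.IsBounded.subset_of_subset_iUnion_image [MetricSpace X] [ProperSpace X]
    {K I : Set X} (hK : Bornology.IsBounded K) (hI : IsClosed I) (hIne : I.Nonempty)
    {f : ι → X → X} {c : ℝ≥0} (hc : c < 1) (hf : ∀ i, LipschitzWith c (f i))
    (hfI : ∀ i, MapsTo (f i) I I) (hKf : K ⊆ ⋃ i, f i '' K) : K ⊆ I := by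
  set S := sSup ((Metric.infDist · I) '' K)
  have hbdd : BddAbove ((Metric.infDist · I) '' K) := by
    obtain ⟨p, hp⟩ := hIne
    obtain ⟨R, hR⟩ := hK.subset_closedBall p
    exact ⟨R, forall_mem_image.2 fun x hx =>
      (Metric.infDist_le_dist_of_mem hp).trans (Metric.mem_closedBall.1 (hR hx))⟩
  have hcontract : ∀ x ∈ K, Metric.infDist x I ≤ c * S := by
    intro x hx
    obtain ⟨i, y, hy, rfl⟩ : ∃ i, ∃ y ∈ K, f i y = x := by simpa using hKf hx
    obtain ⟨p, hp, hyp⟩ := hI.exists_infDist_eq_dist hIne y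
    calc Metric.infDist (f i y) I ≤ dist (f i y) (f i p) := Metric.infDist_le_dist_of_mem (hfI i hp)
      _ ≤ c * dist y p := (hf i).dist_le_mul y p
      _ ≤ c * S := by
        rw [← hyp]; exact mul_le_mul_of_nonneg_left (le_csSup hbdd (mem_image_of_mem _ hy)) c.2
  intro x hx
  have hxS : Metric.infDist x I ≤ S := le_csSup hbdd (mem_image_of_mem _ hx)
  have hS : S ≤ c * S := csSup_le ⟨_, mem_image_of_mem _ hx⟩ (forall_mem_image.2 hcontract)
  have hc' : (c : ℝ) < 1 := hc
  have hS0 : S ≤ 0 := by nlinarith [Metric.infDist_nonneg (x := x) (s := I)]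
  exact (hI.mem_iff_infDist_zero hIne).2 (le_antisymm (hxS.trans hS0) Metric.infDist_nonneg)

def wordMap (f : ι → X → X) : (n : ℕ) → (Fin n → ι) → X → X
  | 0, _ => id
  | n + 1, w => f (w 0) ∘ wordMap f n (Fin.tail w)

theorem lipschitzWith_wordMap [PseudoEMetricSpace X] {f : ι → X → X} {c : ℝ≥0}
    (hf : ∀ i, LipschitzWith c (f i)) : ∀ n w, LipschitzWith (c ^ n) (wordMap f n w)
  | 0, _ => by simpa [wordMap] using LipschitzWith.id
  | n + 1, w => by rw [pow_succ']; exact (hf _).comp (lipschitzWith_wordMap hf n _)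

theorem subset_iUnion_wordMap_image {f : ι → X → X} {K : Set X} (hKf : K ⊆ ⋃ i, f i '' K) :
    ∀ n, K ⊆ ⋃ w : Fin n → ι, wordMap f n w '' K
  | 0 => fun x hx => mem_iUnion.2 ⟨Fin.elim0, x, hx, rfl⟩
  | n + 1 => by
    intro x hx
    obtain ⟨i, y, hy, rfl⟩ : ∃ i, ∃ y ∈ K, f i y = x := by simpa using hKf hx
    obtain ⟨w, z, hz, rfl⟩ := mem_iUnion.1 (subset_iUnion_wordMap_image hKf n hy)
    exact mem_iUnion.2 ⟨Fin.cons i w, z, hz, by simp [wordMap]⟩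

theorem hausdorffMeasure_eq_zero_of_subset_iUnion_image [EMetricSpace X] [MeasurableSpace X]
    [BorelSpace X] [Fintype ι] {K : Set X} (hK : Metric.ediam K ≠ ⊤) {f : ι → X → X} {c : ℝ≥0}
    (hc : c < 1) (hf : ∀ i, LipschitzWith c (f i)) (hKf : K ⊆ ⋃ i, f i '' K) {d : ℝ} (hd : 0 ≤ d)
    (hcd : (Fintype.card ι : ℝ≥0∞) * (c : ℝ≥0∞) ^ d < 1) : μH[d] K = 0 := by
  have hdiam : ∀ n (w : Fin n → ι), Metric.ediam (wordMap f n w '' K) ≤ c ^ n * Metric.ediam K :=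
    fun n w => by simpa using (lipschitzWith_wordMap hf n w).ediam_image_le K
  have hsum : ∀ n, ∑ w : Fin n → ι, Metric.ediam (wordMap f n w '' K) ^ d ≤
      ((Fintype.card ι : ℝ≥0∞) * (c : ℝ≥0∞) ^ d) ^ n * Metric.ediam K ^ d := by
    intro n
    calc ∑ w : Fin n → ι, Metric.ediam (wordMap f n w '' K) ^ d
        ≤ ∑ _w : Fin n → ι, ((c : ℝ≥0∞) ^ n * Metric.ediam K) ^ d :=
          Finset.sum_le_sum fun w _ => ENNReal.rpow_le_rpow (hdiam n w) hd
      _ = _ := by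
          rw [Finset.sum_const, Finset.card_univ, Fintype.card_fun, Fintype.card_fin,
            nsmul_eq_mul, ENNReal.mul_rpow_of_nonneg _ _ hd, mul_pow, ← ENNReal.rpow_natCast,
            ← ENNReal.rpow_mul, mul_comm (n : ℝ), ENNReal.rpow_mul, ENNReal.rpow_natCast]
          push_cast
          ring
  have hlim : Tendsto (fun n => ((Fintype.card ι : ℝ≥0∞) * (c : ℝ≥0∞) ^ d) ^ n *
      Metric.ediam K ^ d) atTop (nhds 0) := by
    simpa using ENNReal.Tendsto.mul_const (ENNReal.tendsto_pow_atTop_nhds_zero_of_lt_one hcd)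
      (Or.inr (ENNReal.rpow_ne_top_of_nonneg hd hK))
  have hsmall : Tendsto (fun n => (c : ℝ≥0∞) ^ n * Metric.ediam K) atTop (nhds 0) := by
    simpa using ENNReal.Tendsto.mul_const
      (ENNReal.tendsto_pow_atTop_nhds_zero_of_lt_one (ENNReal.coe_lt_one_iff.2 hc)) (Or.inr hK)
  have hcov := Measure.hausdorffMeasure_le_liminf_sum d K _ hsmall
    (fun n (w : Fin n → ι) => wordMap f n w '' K) (Eventually.of_forall hdiam)
    (Eventually.of_forall (subset_iUnion_wordMap_image hKf))
  refine le_antisymm (hcov.trans ?_) zero_le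
  exact (liminf_le_liminf (Eventually.of_forall hsum)).trans hlim.liminf_eq.le

theorem dimH_le_of_subset_iUnion_image [EMetricSpace X] [Fintype ι] {K : Set X}
    (hK : Metric.ediam K ≠ ⊤) {f : ι → X → X} {c : ℝ≥0} (hc0 : 0 < c) (hc : c < 1)
    (hf : ∀ i, LipschitzWith c (f i)) (hKf : K ⊆ ⋃ i, f i '' K) :
    dimH K ≤ ENNReal.ofReal (Real.log (Fintype.card ι) / Real.log (c : ℝ)⁻¹) := by
  borelize X
  refine dimH_le fun d hd => le_of_not_gt fun hlt => ?_
  have hlogc : 0 < Real.log (c : ℝ)⁻¹ :=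
    Real.log_pos ((one_lt_inv₀ (by exact_mod_cast hc0)).2 (by exact_mod_cast hc))
  have hlog : Real.log (Fintype.card ι) < d * Real.log (c : ℝ)⁻¹ :=
    (div_lt_iff₀ hlogc).1 ((Real.le_coe_toNNReal _).trans_lt (NNReal.coe_lt_coe.2
      (ENNReal.coe_lt_coe.1 hlt)))
  have hreal : (Fintype.card ι : ℝ) * (c : ℝ) ^ (d : ℝ) < 1 := by
    rcases (Nat.zero_le (Fintype.card ι)).eq_or_lt with h0 | hpos
    · simp [← h0]
    rw [Real.rpow_def_of_pos (by exact_mod_cast hc0), ← Real.exp_log (by positivity :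
      (0 : ℝ) < Fintype.card ι), ← Real.exp_add, Real.exp_lt_one_iff]
    rw [Real.log_inv] at hlog
    linarith
  have hcd : (Fintype.card ι : ℝ≥0∞) * (c : ℝ≥0∞) ^ (d : ℝ) < 1 := by
    rw [← ENNReal.coe_rpow_of_nonneg c d.coe_nonneg]
    exact_mod_cast hreal
  have := hausdorffMeasure_eq_zero_of_subset_iUnion_image hK hc hf hKf d.coe_nonneg hcd
  simp [hd] at this

theorem dimH_le_dimH_image_div_of_edist_le {Y : Type*} [EMetricSpace X] [EMetricSpace Y]
    {f : X → Y} {s : Set X} {C γ : ℝ≥0} (hγ : 0 < γ)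
    (h : ∀ x ∈ s, ∀ y ∈ s, edist x y ≤ C * edist (f x) (f y) ^ (γ : ℝ)) :
    dimH s ≤ dimH (f '' s) / γ := by
  rcases isEmpty_or_nonempty X with hX | hX
  · simp [s.eq_empty_of_isEmpty]
  have hinj : InjOn f s := fun x hx y hy hxy => by
    simpa [hxy, ENNReal.zero_rpow_of_pos (NNReal.coe_pos.2 hγ)] using h x hx y hy
  have hg : HolderOnWith C γ (Function.invFunOn f s) (f '' s) := by
    rintro _ ⟨x, hx, rfl⟩ _ ⟨y, hy, rfl⟩
    rw [hinj.leftInvOn_invFunOn hx, hinj.leftInvOn_invFunOn hy]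
    exact h x hx y hy
  simpa [hinj.leftInvOn_invFunOn.image_image] using hg.dimH_image_le hγ

end SelfSimilar

theorem le_div_rpow_of_forall_lt_mul_pow {r c γ d D : ℝ} (hr0 : 0 < r) (hr1 : r < 1) (hc : 0 < c)
    (hγ : 0 < γ) (hD : 0 ≤ D) (hd : d ≤ 1)
    (h : ∀ m : ℕ, D < c * r ^ m → d ≤ (r ^ (m + 1)) ^ γ) : d ≤ (D / c) ^ γ := by
  rcases hD.eq_or_lt with rfl | hDpos
  · rw [zero_div, Real.zero_rpow hγ.ne']
    have hlim : Tendsto (fun m : ℕ => (r ^ γ) ^ (m + 1)) atTop (𝓝 0) :=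
      (tendsto_pow_atTop_nhds_zero_of_lt_one (by positivity)
        (Real.rpow_lt_one hr0.le hr1 hγ)).comp (tendsto_add_atTop_nat 1)
    refine ge_of_tendsto hlim (Eventually.of_forall fun m => ?_)
    rw [Real.rpow_pow_comm hr0.le]
    exact h m (by positivity)
  rcases le_or_gt c D with hcD | hDc
  · exact hd.trans (Real.one_le_rpow ((one_le_div hc).2 hcD) hγ.le)
  have hex : ∃ m, c * r ^ m ≤ D := by
    obtain ⟨m, hm⟩ := exists_pow_lt_of_lt_one (div_pos hDpos hc) hr1
    exact ⟨m, by rw [lt_div_iff₀ hc] at hm; linarith⟩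
  obtain ⟨m, hm⟩ : ∃ m, Nat.find hex = m + 1 := Nat.exists_eq_succ_of_ne_zero fun h0 => by
    have := Nat.find_spec hex
    rw [h0, pow_zero, mul_one] at this
    linarith
  have hlt : D < c * r ^ m := not_le.1 (Nat.find_min hex (by omega))
  have hle : c * r ^ (m + 1) ≤ D := hm ▸ Nat.find_spec hex
  exact (h m hlt).trans
    (Real.rpow_le_rpow (by positivity) ((le_div_iff₀ hc).2 (by linarith)) hγ.le)

theorem inv_two_pow_le_pow_rpow {r γ θ : ℝ} (hr : 0 < r)
    (hγ : γ * Real.log r⁻¹ = θ * Real.log 2) {k n : ℕ} (h : θ * n ≤ k) :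
    (2⁻¹ : ℝ) ^ k ≤ (r ^ n) ^ γ := by
  rw [Real.rpow_def_of_pos (pow_pos hr n), Real.log_pow, ← Real.exp_log (by positivity :
    (0 : ℝ) < 2⁻¹ ^ k), Real.exp_le_exp, Real.log_pow, Real.log_inv]
  rw [Real.log_inv] at hγ
  have hlog2 := Real.log_pos one_lt_two
  have : n * Real.log r * γ = -(θ * n) * Real.log 2 := by linear_combination (-n : ℝ) * hγ
  rw [this]
  nlinarith

theorem ENNReal.ofReal_le_of_forall_lt {s : ℝ} {x : ℝ≥0∞}
    (h : ∀ t < s, ENNReal.ofReal t ≤ x) : ENNReal.ofReal s ≤ x := by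
  refine le_of_forall_lt_imp_le_of_dense fun b hb => ?_
  have hbt := hb.ne_top
  rw [← ENNReal.ofReal_toReal hbt] at hb ⊢
  exact h _ (ENNReal.ofReal_lt_ofReal_iff'.1 hb).1

namespace TentAttractor

def ifsMap (r : ℝ) (b : Bool) (x : ℝ) : ℝ := if b then 1 - r * x else r * x

def tentMap (a : ℝ) : ℝ → ℝ := fun x => a - 2 * a * |x - 1 / 2|

def signProd (α : ℕ → Bool) (n : ℕ) : ℝ := ∏ k ∈ Finset.range n, if α k then -1 else 1

def codingTerm (r : ℝ) (α : ℕ → Bool) (n : ℕ) : ℝ := (if α n then signProd α n else 0) * r ^ n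

/-- The point `ifsMap r (α 0) (ifsMap r (α 1) (⋯))`: expanding the composition, every map
`x ↦ 1 - r * x` contributes a constant and reverses the sign of all later terms. -/
def coding (r : ℝ) (α : ℕ → Bool) : ℝ := ∑' n, codingTerm r α n

variable {r : ℝ}

theorem dist_ifsMap (hr : 0 ≤ r) (b : Bool) (x y : ℝ) :
    dist (ifsMap r b x) (ifsMap r b y) = r * dist x y := by
  have h : ifsMap r b x - ifsMap r b y = (if b then -r else r) * (x - y) := by
    cases b <;> simp only [ifsMap, Bool.false_eq_true, if_false, if_true] <;> ring
  rw [Real.dist_eq, Real.dist_eq, h, abs_mul]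
  cases b <;> simp [abs_of_nonneg hr]

theorem lipschitzWith_ifsMap (hr : 0 ≤ r) (b : Bool) :
    LipschitzWith r.toNNReal (ifsMap r b) :=
  LipschitzWith.of_dist_le_mul fun x y => by
    rw [Real.coe_toNNReal r hr, dist_ifsMap hr]

theorem mapsTo_ifsMap_Icc (hr0 : 0 ≤ r) (hr1 : r ≤ 1) (b : Bool) :
    MapsTo (ifsMap r b) (Icc 0 1) (Icc 0 1) := by
  rintro x ⟨hx0, hx1⟩
  have : r * x ≤ 1 := by nlinarith
  cases b <;> simp only [ifsMap, Bool.false_eq_true, if_false, if_true, mem_Icc] <;>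
    constructor <;> nlinarith

theorem abs_signProd (α : ℕ → Bool) (n : ℕ) : |signProd α n| = 1 := by
  rw [signProd, Finset.abs_prod]
  exact Finset.prod_eq_one fun k _ => by split_ifs <;> simp

theorem abs_codingTerm_le (hr : 0 ≤ r) (α : ℕ → Bool) (n : ℕ) : |codingTerm r α n| ≤ r ^ n := by
  rw [codingTerm, abs_mul, abs_pow, abs_of_nonneg hr]
  split_ifs <;> simp [abs_signProd, pow_nonneg hr]

theorem summable_codingTerm (hr0 : 0 ≤ r) (hr1 : r < 1) (α : ℕ → Bool) :
    Summable (codingTerm r α) :=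
  Summable.of_norm_bounded (summable_geometric_of_lt_one hr0 hr1) (abs_codingTerm_le hr0 α)

theorem abs_coding_le (hr0 : 0 ≤ r) (hr1 : r < 1) (α : ℕ → Bool) : |coding r α| ≤ (1 - r)⁻¹ := by
  rw [← tsum_geometric_of_lt_one hr0 hr1]
  exact (norm_tsum_le_tsum_norm (summable_codingTerm hr0 hr1 α).norm).trans
    ((summable_codingTerm hr0 hr1 α).norm.tsum_le_tsum (abs_codingTerm_le hr0 α)
      (summable_geometric_of_lt_one hr0 hr1))

theorem coding_eq_ifsMap (hr0 : 0 ≤ r) (hr1 : r < 1) (α : ℕ → Bool) :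
    coding r α = ifsMap r (α 0) (coding r fun n => α (n + 1)) := by
  have hterm : ∀ n, codingTerm r α (n + 1) =
      (if α 0 then -1 else 1) * r * codingTerm r (fun n => α (n + 1)) n := by
    intro n
    simp only [codingTerm, signProd, Finset.prod_range_succ']
    split_ifs <;> ring
  rw [coding, (summable_codingTerm hr0 hr1 α).tsum_eq_zero_add, tsum_congr hterm, tsum_mul_left,
    ← coding]
  cases h : α 0 <;> simp [ifsMap, codingTerm, signProd, h]
  ring

theorem coding_shift_eq_ifsMap (hr0 : 0 ≤ r) (hr1 : r < 1) (α : ℕ → Bool) (m : ℕ) :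
    coding r (fun k => α (k + m)) = ifsMap r (α m) (coding r fun k => α (k + (m + 1))) := by
  rw [coding_eq_ifsMap hr0 hr1]
  simp only [zero_add, add_right_comm _ 1 m, add_assoc]

theorem isBounded_range_coding (hr0 : 0 ≤ r) (hr1 : r < 1) :
    Bornology.IsBounded (range (coding r)) :=
  (Metric.isBounded_Icc (-(1 - r)⁻¹) (1 - r)⁻¹).subset <| range_subset_iff.2 fun α =>
    abs_le.1 (abs_coding_le hr0 hr1 α)

theorem range_coding_subset_iUnion (hr0 : 0 ≤ r) (hr1 : r < 1) :
    range (coding r) ⊆ ⋃ b, ifsMap r b '' range (coding r) :=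
  range_subset_iff.2 fun α => mem_iUnion.2
    ⟨α 0, _, mem_range_self _, (coding_eq_ifsMap hr0 hr1 α).symm⟩

theorem coding_mem {Λ : Set ℝ} (hΛc : IsClosed Λ) (hΛne : Λ.Nonempty) (hr0 : 0 ≤ r)
    (hr1 : r < 1) (hΛ : ∀ b, MapsTo (ifsMap r b) Λ Λ) (α : ℕ → Bool) : coding r α ∈ Λ :=
  (isBounded_range_coding hr0 hr1).subset_of_subset_iUnion_image hΛc hΛne
    (Real.toNNReal_lt_one.2 hr1) (lipschitzWith_ifsMap hr0) hΛ (range_coding_subset_iUnion hr0 hr1)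
    (mem_range_self α)

theorem coding_mem_Icc (hr0 : 0 ≤ r) (hr1 : r < 1) (α : ℕ → Bool) : coding r α ∈ Icc 0 1 :=
  coding_mem isClosed_Icc (nonempty_Icc.2 zero_le_one) hr0 hr1
    (mapsTo_ifsMap_Icc hr0 hr1.le) α

section Pinning

variable (hr0 : 0 ≤ r) (hr1 : r < 1)
include hr0 hr1

theorem abs_coding_sub_eq_of_forall_lt {α β : ℕ → Bool} {m : ℕ} (h : ∀ i < m, α i = β i) :
    |coding r α - coding r β| =
      r ^ m * |coding r (fun k => α (k + m)) - coding r (fun k => β (k + m))| := by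
  induction m with
  | zero => simp
  | succ m ih =>
    rw [ih fun i hi => h i (by omega), coding_shift_eq_ifsMap hr0 hr1 α m,
      coding_shift_eq_ifsMap hr0 hr1 β m, h m (by omega), ← Real.dist_eq, dist_ifsMap hr0,
      Real.dist_eq, pow_succ, mul_assoc]

theorem abs_coding_sub_le_pow {α β : ℕ → Bool} {m : ℕ} (h : ∀ i < m, α i = β i) :
    |coding r α - coding r β| ≤ r ^ m := by
  have hα := coding_mem_Icc hr0 hr1 fun k => α (k + m)
  have hβ := coding_mem_Icc hr0 hr1 fun k => β (k + m)
  rw [abs_coding_sub_eq_of_forall_lt hr0 hr1 h]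
  exact mul_le_of_le_one_right (pow_nonneg hr0 m) (abs_sub_le_iff.2 ⟨by linarith [hα.2, hβ.1],
    by linarith [hα.1, hβ.2]⟩)

theorem one_sub_two_mul_le_abs_coding_sub {α β : ℕ → Bool} (h : α 0 ≠ β 0) :
    1 - 2 * r ≤ |coding r α - coding r β| := by
  have hα := coding_mem_Icc hr0 hr1 fun n => α (n + 1)
  have hβ := coding_mem_Icc hr0 hr1 fun n => β (n + 1)
  rw [coding_eq_ifsMap hr0 hr1 α, coding_eq_ifsMap hr0 hr1 β, le_abs]
  cases hα0 : α 0 <;> cases hβ0 : β 0 <;> simp only [hα0, hβ0, ne_eq, not_true_eq_false] at h <;>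
    simp only [ifsMap, Bool.false_eq_true, if_false, if_true]
  · right; nlinarith [hα.1, hα.2, hβ.1, hβ.2]
  · left; nlinarith [hα.1, hα.2, hβ.1, hβ.2]

theorem eq_of_abs_coding_sub_lt {α β : ℕ → Bool} {m : ℕ}
    (h : |coding r α - coding r β| < (1 - 2 * r) * r ^ m) : ∀ k ≤ m, α k = β k := by
  by_contra! hex
  obtain ⟨k, hkm, hk⟩ := hex
  have hex : ∃ k, α k ≠ β k := ⟨k, hk⟩
  set k₀ := Nat.find hex
  have hsep := one_sub_two_mul_le_abs_coding_sub hr0 hr1 (α := fun i => α (i + k₀))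
    (β := fun i => β (i + k₀)) (by simpa using Nat.find_spec hex)
  rw [abs_coding_sub_eq_of_forall_lt hr0 hr1 fun i hi => not_not.1 (Nat.find_min hex hi)] at h
  have hpow : r ^ m ≤ r ^ k₀ := pow_le_pow_of_le_one hr0 hr1.le ((Nat.find_min' hex hk).trans hkm)
  have hk₀ := pow_nonneg hr0 k₀
  rcases le_or_gt 0 (1 - 2 * r) with h12 | h12
  · nlinarith [mul_le_mul_of_nonneg_left hsep hk₀, mul_le_mul_of_nonneg_left hpow h12]
  · nlinarith [abs_nonneg (coding r (fun i => α (i + k₀)) - coding r (fun i => β (i + k₀))),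
      pow_nonneg hr0 m]

end Pinning

variable {a : ℝ}

theorem tentMap_ifsMap (ha : 0 < a) {y : ℝ} (hy : y ≤ a) (b : Bool) :
    tentMap a (ifsMap (2 * a)⁻¹ b y) = y := by
  have hy' : (2 * a)⁻¹ * y ≤ 1 / 2 := by
    rw [inv_mul_le_iff₀ (by positivity)]; linarith
  cases b <;> simp only [tentMap, ifsMap, Bool.false_eq_true, if_false, if_true]
  · rw [abs_of_nonpos (by linarith)]; field_simp; ring
  · rw [abs_of_nonneg (by linarith)]; field_simp; ring

theorem tentMap_iterate_coding (ha : 1 ≤ a) (α : ℕ → Bool) (n : ℕ) :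
    (tentMap a)^[n] (coding (2 * a)⁻¹ α) = coding (2 * a)⁻¹ fun k => α (k + n) := by
  have hr0 : 0 ≤ (2 * a)⁻¹ := by positivity
  have hr1 : (2 * a)⁻¹ < 1 := inv_lt_one_of_one_lt₀ (by linarith)
  induction n with
  | zero => simp
  | succ n ih =>
    rw [Function.iterate_succ_apply', ih, coding_shift_eq_ifsMap hr0 hr1,
      tentMap_ifsMap (by linarith) ((coding_mem_Icc hr0 hr1 _).2.trans ha)]

theorem image_tentMap_eq (ha : 0 < a) {Λ : Set ℝ} (hΛa : ∀ y ∈ Λ, y ≤ a)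
    (hΛ : Λ = ⋃ b, ifsMap (2 * a)⁻¹ b '' Λ) : tentMap a '' Λ = Λ := by
  refine Subset.antisymm ?_ fun y hy => ?_
  · rintro _ ⟨x, hx, rfl⟩
    rw [hΛ] at hx
    obtain ⟨b, y, hy, rfl⟩ : ∃ b, ∃ y ∈ Λ, ifsMap (2 * a)⁻¹ b y = x := by simpa using hx
    rwa [tentMap_ifsMap ha (hΛa y hy)]
  · have hmem : ifsMap (2 * a)⁻¹ false y ∈ Λ := by
      rw [hΛ]; exact mem_iUnion.2 ⟨false, mem_image_of_mem _ hy⟩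
    exact ⟨_, hmem, tentMap_ifsMap ha (hΛa y hy) false⟩

/-- Along the tent orbit the distance is at most `r ^ j` at the start of an agreement window of
length `j`, and at least `1 - 2 * r` at a disagreement. -/
theorem coding_mem_liYorkePairs (ha : 1 < a) {Λ : Set ℝ} (hΛc : IsClosed Λ) (hΛne : Λ.Nonempty)
    (hΛ : ∀ b, MapsTo (ifsMap (2 * a)⁻¹ b) Λ Λ) {α β : ℕ → Bool}
    (hsync : ∀ j, ∃ᶠ n in atTop, ∀ i < j, α (i + n) = β (i + n))
    (hflip : ∃ᶠ n in atTop, α n ≠ β n) :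
    (coding (2 * a)⁻¹ α, coding (2 * a)⁻¹ β) ∈ liYorkePairs (tentMap a) Λ := by
  have hr0 : 0 ≤ (2 * a)⁻¹ := by positivity
  have hr2 : (2 * a)⁻¹ < 1 / 2 := by
    rw [inv_lt_comm₀ (by positivity) (by norm_num)]; linarith
  have hr1 : (2 * a)⁻¹ < 1 := by linarith
  set g := fun n : ℕ =>
    dist ((tentMap a)^[n] (coding (2 * a)⁻¹ α)) ((tentMap a)^[n] (coding (2 * a)⁻¹ β))
  have hg : ∀ n, g n =
      |coding (2 * a)⁻¹ (fun k => α (k + n)) - coding (2 * a)⁻¹ (fun k => β (k + n))| :=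
    fun n => by simp only [g, tentMap_iterate_coding ha.le, Real.dist_eq]
  have hbdd : IsBoundedUnder (· ≤ ·) atTop g :=
    isBoundedUnder_of ⟨1, fun n => by
      simpa [hg] using abs_coding_sub_le_pow hr0 hr1 (m := 0) (by simp)⟩
  refine ⟨coding_mem hΛc hΛne hr0 hr1 hΛ α, coding_mem hΛc hΛne hr0 hr1 hΛ β,
    le_antisymm (le_of_forall_pos_le_add fun ε hε => ?_)
      (le_liminf_of_le hbdd.isCoboundedUnder_ge (Eventually.of_forall fun n => dist_nonneg)),
    ?_⟩
  · obtain ⟨j, hj⟩ := exists_pow_lt_of_lt_one hε hr1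
    refine liminf_le_of_frequently_le ((hsync j).mono fun n hn => ?_)
      (isBoundedUnder_of ⟨0, fun n => dist_nonneg⟩)
    change g n ≤ 0 + ε
    rw [zero_add, hg]
    exact (abs_coding_sub_le_pow hr0 hr1 hn).trans hj.le
  · refine (sub_pos.2 (by linarith : 2 * (2 * a)⁻¹ < 1)).trans_le
      (le_limsup_of_frequently_le (hflip.mono fun n hn => ?_) hbdd)
    change _ ≤ g n
    rw [hg]
    exact one_sub_two_mul_le_abs_coding_sub hr0 hr1 (by simpa using hn)


/-- The binary digit of `x` of weight `2⁻¹ ^ (k + 1)`. -/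
def binaryDigit (k : ℕ) (x : ℝ) : Bool := decide (⌊x * 2 ^ (k + 1)⌋ % 2 = 1)

theorem floor_mul_two_pow_succ (m : ℕ) (x : ℝ) :
    ⌊x * 2 ^ (m + 1)⌋ = 2 * ⌊x * 2 ^ m⌋ + if binaryDigit m x then 1 else 0 := by
  have e : x * 2 ^ (m + 1) = x * 2 ^ m * 2 := by ring
  have h1 : 2 * ⌊x * 2 ^ m⌋ ≤ ⌊x * 2 ^ (m + 1)⌋ := by
    rw [Int.le_floor, e]; push_cast; linarith [Int.floor_le (x * 2 ^ m)]
  have h2 : ⌊x * 2 ^ (m + 1)⌋ < 2 * ⌊x * 2 ^ m⌋ + 2 := by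
    rw [Int.floor_lt, e]; push_cast; linarith [Int.lt_floor_add_one (x * 2 ^ m)]
  by_cases h : ⌊x * 2 ^ (m + 1)⌋ % 2 = 1 <;> simp [binaryDigit, h] <;> omega

theorem abs_sub_le_of_binaryDigit_eq {x y : ℝ} (hx : x ∈ Ico 0 1) (hy : y ∈ Ico 0 1) {m : ℕ}
    (h : ∀ k < m, binaryDigit k x = binaryDigit k y) : |x - y| ≤ 2⁻¹ ^ m := by
  have hfloor : ⌊x * 2 ^ m⌋ = ⌊y * 2 ^ m⌋ := by
    induction m with
    | zero => simp [Int.floor_eq_zero_iff.2 hx, Int.floor_eq_zero_iff.2 hy]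
    | succ m ih =>
      rw [floor_mul_two_pow_succ, floor_mul_two_pow_succ, ih fun k hk => h k (by omega),
        h m (by omega)]
  have := Int.abs_sub_lt_one_of_floor_eq_floor hfloor
  rw [← sub_mul, abs_mul, abs_pow, abs_two] at this
  rw [inv_pow, ← one_div, le_div_iff₀ (by positivity)]
  exact this.le

section Blocks

variable {N : ℕ}

def IsForcedPos (N n : ℕ) : Prop := ∃ j, N * 4 ^ j ≤ n ∧ n ≤ N * 4 ^ j + j

open Classical in
def freeCount (N n : ℕ) : ℕ := ((Finset.range n).filter fun k => ¬IsForcedPos N k).card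

theorem add_lt_mul_four_pow (hN : 1 ≤ N) {j j' : ℕ} (h : j < j') : N * 4 ^ j + j < N * 4 ^ j' := by
  have h1 : j < 4 ^ j := Nat.lt_pow_self (by norm_num)
  have h2 : N * 4 ^ (j + 1) ≤ N * 4 ^ j' :=
    Nat.mul_le_mul_left N (Nat.pow_le_pow_right (by norm_num) h)
  have h3 : 4 ^ j ≤ N * 4 ^ j := Nat.le_mul_of_pos_left _ hN
  have h4 : N * 4 ^ (j + 1) = 4 * (N * 4 ^ j) := by ring
  omega

theorem two_mul_sum_range_succ_le_four_pow (J : ℕ) : 2 * ∑ j ∈ Finset.range J, (j + 1) ≤ 4 ^ J := by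
  induction J with
  | zero => simp
  | succ J ih =>
    have : J + 1 ≤ 4 ^ J := Nat.lt_pow_self (by norm_num)
    rw [Finset.sum_range_succ, pow_succ]
    omega

open Classical in
theorem card_forced_mul_le (hN : 1 ≤ N) (n : ℕ) :
    ((Finset.range n).filter fun k => IsForcedPos N k).card * N ≤ 2 * n := by
  have hex : ∃ J, n ≤ N * 4 ^ J :=
    ⟨n, (Nat.lt_pow_self (by norm_num)).le.trans (Nat.le_mul_of_pos_left _ hN)⟩
  set J := Nat.find hex
  have hJ : n ≤ N * 4 ^ J := Nat.find_spec hex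
  have hsub : (Finset.range n).filter (fun k => IsForcedPos N k) ⊆
      (Finset.range J).biUnion fun j => Finset.Icc (N * 4 ^ j) (N * 4 ^ j + j) := by
    intro k hk
    obtain ⟨hkn, j, hj1, hj2⟩ := by simpa using hk
    refine Finset.mem_biUnion.2 ⟨j, Finset.mem_range.2 ?_, Finset.mem_Icc.2 ⟨hj1, hj2⟩⟩
    by_contra! hJj
    have := Nat.mul_le_mul_left N (Nat.pow_le_pow_right (by norm_num : 1 ≤ 4) hJj)
    omega
  have hcard : ((Finset.range n).filter fun k => IsForcedPos N k).card ≤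
      ∑ j ∈ Finset.range J, (j + 1) := by
    refine (Finset.card_le_card hsub).trans (Finset.card_biUnion_le.trans_eq ?_)
    refine Finset.sum_congr rfl fun j _ => ?_
    rw [Nat.card_Icc]
    omega
  rcases Nat.eq_zero_or_pos J with hJ0 | hJ0
  · rw [hJ0, Finset.sum_range_zero, Nat.le_zero] at hcard
    simp [hcard]
  -- `J` is the least exponent with `n ≤ N * 4 ^ J`, so `N * 4 ^ J < 4 * n`
  obtain ⟨K, hK⟩ : ∃ K, J = K + 1 := Nat.exists_eq_succ_of_ne_zero hJ0.ne'
  have hlt : ¬n ≤ N * 4 ^ K := Nat.find_min hex (by omega)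
  have hsum := Nat.mul_le_mul_right N (two_mul_sum_range_succ_le_four_pow J)
  rw [hK, pow_succ] at hsum
  rw [hK] at hcard
  nlinarith [Nat.mul_le_mul_right N hcard]

open Classical in
theorem freeCount_add_card_forced (N n : ℕ) :
    freeCount N n + ((Finset.range n).filter fun k => IsForcedPos N k).card = n := by
  rw [freeCount, add_comm, Finset.card_filter_add_card_filter_not, Finset.card_range]

open Classical in
theorem freeCount_le (N n : ℕ) : freeCount N n ≤ n :=
  (Finset.card_filter_le _ _).trans (Finset.card_range n).le

theorem exists_forall_mul_le_freeCount {θ : ℝ} (hθ : θ < 1) :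
    ∃ N, 1 ≤ N ∧ ∀ n, θ * n ≤ freeCount N n := by
  classical
  refine ⟨max 1 ⌈2 / (1 - θ)⌉₊, le_max_left _ _, fun n => ?_⟩
  set N := max 1 ⌈2 / (1 - θ)⌉₊
  have hN : (2 : ℝ) ≤ (1 - θ) * N := by
    have := (Nat.le_ceil (2 / (1 - θ))).trans (Nat.cast_le.2 (le_max_right 1 ⌈2 / (1 - θ)⌉₊))
    rwa [div_le_iff₀ (by linarith), mul_comm] at this
  have hcount : (((Finset.range n).filter fun k => IsForcedPos N k).card : ℝ) * N ≤ 2 * n := by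
    exact_mod_cast card_forced_mul_le (le_max_left _ _) n
  have hsum :
      (freeCount N n : ℝ) + ((Finset.range n).filter fun k => IsForcedPos N k).card = n := by
    exact_mod_cast freeCount_add_card_forced N n
  have hNpos : (0 : ℝ) < N := by positivity
  nlinarith [(Nat.cast_nonneg n : (0 : ℝ) ≤ n)]

theorem exists_lt_freeCount_eq (N : ℕ) :
    ∀ n, ∀ i < freeCount N n, ∃ k < n, ¬IsForcedPos N k ∧ freeCount N k = i := by
  classical
  intro n
  induction n with
  | zero => simp [freeCount]
  | succ n ih =>
    intro i hi
    have hsucc : freeCount N (n + 1) = freeCount N n + if IsForcedPos N n then 0 else 1 := by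
      simp only [freeCount, Finset.range_add_one, Finset.filter_insert]
      split_ifs <;> simp_all
    by_cases hin : i < freeCount N n
    · obtain ⟨k, hk, hfree, hki⟩ := ih i hin
      exact ⟨k, by omega, hfree, hki⟩
    · by_cases hforced : IsForcedPos N n
      · simp only [hsucc, hforced, if_true] at hi; omega
      · simp only [hsucc, hforced, if_false] at hi
        exact ⟨n, by omega, hforced, by omega⟩

open Classical in
def companion (N : ℕ) (x y : ℝ) (n : ℕ) : Bool :=
  if ∃ j, n = N * 4 ^ j + j then !binaryDigit n x
  else if IsForcedPos N n then binaryDigit n x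
  else binaryDigit (freeCount N n) y

theorem companion_add_mul_four_pow (hN : 1 ≤ N) {i j : ℕ} (hi : i < j) (x y : ℝ) :
    companion N x y (i + N * 4 ^ j) = binaryDigit (i + N * 4 ^ j) x := by
  have hlast : ¬∃ j', i + N * 4 ^ j = N * 4 ^ j' + j' := by
    rintro ⟨j', hj'⟩
    rcases lt_trichotomy j' j with h | rfl | h
    · have := add_lt_mul_four_pow hN h; omega
    · omega
    · have := add_lt_mul_four_pow hN h; omega
  rw [companion, if_neg hlast, if_pos ⟨j, by omega, by omega⟩]

theorem companion_mul_four_pow_add (N j : ℕ) (x y : ℝ) :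
    companion N x y (N * 4 ^ j + j) = !binaryDigit (N * 4 ^ j + j) x := by
  rw [companion, if_pos ⟨j, rfl⟩]

theorem companion_of_not_isForcedPos {n : ℕ} (h : ¬IsForcedPos N n) (x y : ℝ) :
    companion N x y n = binaryDigit (freeCount N n) y := by
  rw [companion, if_neg fun ⟨j, hj⟩ => h ⟨j, by omega, by omega⟩, if_neg h]

theorem frequently_binaryDigit_eq_companion (hN : 1 ≤ N) (x y : ℝ) (j : ℕ) :
    ∃ᶠ n in atTop, ∀ i < j, binaryDigit (i + n) x = companion N x y (i + n) := by
  refine frequently_atTop.2 fun M => ⟨N * 4 ^ max j M, ?_, fun i hi =>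
    (companion_add_mul_four_pow hN (by omega) x y).symm⟩
  have : max j M < 4 ^ max j M := Nat.lt_pow_self (by norm_num)
  have := Nat.le_mul_of_pos_left (4 ^ max j M) hN
  omega

theorem frequently_binaryDigit_ne_companion (N : ℕ) (x y : ℝ) :
    ∃ᶠ n in atTop, binaryDigit n x ≠ companion N x y n :=
  frequently_atTop.2 fun M => ⟨N * 4 ^ M + M, by omega, by
    rw [companion_mul_four_pow_add]; exact Bool.self_ne_not _⟩

theorem binaryDigit_eq_of_companion_eq {x x' y y' : ℝ} {n : ℕ}
    (h : ∀ k < n, companion N x y k = companion N x' y' k) :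
    ∀ i < freeCount N n, binaryDigit i y = binaryDigit i y' := by
  intro i hi
  obtain ⟨k, hk, hfree, rfl⟩ := exists_lt_freeCount_eq N n i hi
  simpa [companion_of_not_isForcedPos hfree] using h k hk

end Blocks

def pairEmbedding (r : ℝ) (N : ℕ) (p : ℝ × ℝ) : ℝ × ℝ :=
  (coding r (binaryDigit · p.1), coding r (companion N p.1 p.2))

theorem pairEmbedding_mem_liYorkePairs (ha : 1 < a) {Λ : Set ℝ} (hΛc : IsClosed Λ)
    (hΛne : Λ.Nonempty) (hΛ : ∀ b, MapsTo (ifsMap (2 * a)⁻¹ b) Λ Λ) {N : ℕ} (hN : 1 ≤ N)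
    (p : ℝ × ℝ) : pairEmbedding (2 * a)⁻¹ N p ∈ liYorkePairs (tentMap a) Λ :=
  coding_mem_liYorkePairs ha hΛc hΛne hΛ (frequently_binaryDigit_eq_companion hN p.1 p.2)
    (frequently_binaryDigit_ne_companion N p.1 p.2)

theorem dist_le_of_dist_pairEmbedding_lt (hr0 : 0 ≤ r) (hr1 : r < 1) {N : ℕ} {p q : ℝ × ℝ}
    (hp : p ∈ Ico 0 1 ×ˢ Ico 0 1) (hq : q ∈ Ico 0 1 ×ˢ Ico 0 1) {m : ℕ}
    (h : dist (pairEmbedding r N p) (pairEmbedding r N q) < (1 - 2 * r) * r ^ m) :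
    dist p q ≤ 2⁻¹ ^ freeCount N (m + 1) := by
  rw [Prod.dist_eq, max_lt_iff, Real.dist_eq, Real.dist_eq] at h
  have hx := eq_of_abs_coding_sub_lt hr0 hr1 h.1
  have hy := eq_of_abs_coding_sub_lt hr0 hr1 h.2
  have hpow : (2⁻¹ : ℝ) ^ (m + 1) ≤ 2⁻¹ ^ freeCount N (m + 1) :=
    pow_le_pow_of_le_one (by norm_num) (by norm_num) (freeCount_le N (m + 1))
  rw [Prod.dist_eq, Real.dist_eq, Real.dist_eq]
  exact max_le ((abs_sub_le_of_binaryDigit_eq hp.1 hq.1 fun k hk => hx k (by omega)).trans hpow)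
    (abs_sub_le_of_binaryDigit_eq hp.2 hq.2
      (binaryDigit_eq_of_companion_eq fun k hk => hy k (by omega)))

theorem edist_le_mul_edist_pairEmbedding_rpow (hr0 : 0 < r) (hr2 : r < 1 / 2) {N : ℕ} {θ γ : ℝ}
    (hθN : ∀ n, θ * n ≤ freeCount N n) (hγ0 : 0 < γ) (hγ : γ * Real.log r⁻¹ = θ * Real.log 2)
    {p q : ℝ × ℝ} (hp : p ∈ Ico 0 1 ×ˢ Ico 0 1) (hq : q ∈ Ico 0 1 ×ˢ Ico 0 1) :
    edist p q ≤ ((1 - 2 * r) ^ γ)⁻¹.toNNReal *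
      edist (pairEmbedding r N p) (pairEmbedding r N q) ^ (γ.toNNReal : ℝ) := by
  have hr1 : r < 1 := by linarith
  have hc : 0 < 1 - 2 * r := by linarith
  have hpq : dist p q ≤ 1 := by
    rw [Prod.dist_eq]
    exact max_le (Real.dist_le_of_mem_Icc_01 (Ico_subset_Icc_self hp.1) (Ico_subset_Icc_self hq.1))
      (Real.dist_le_of_mem_Icc_01 (Ico_subset_Icc_self hp.2) (Ico_subset_Icc_self hq.2))
  have hdist := le_div_rpow_of_forall_lt_mul_pow hr0 hr1 hc hγ0 dist_nonneg hpq fun m hm =>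
    (dist_le_of_dist_pairEmbedding_lt hr0.le hr1 hp hq hm).trans
      (inv_two_pow_le_pow_rpow hr0 hγ (hθN (m + 1)))
  rw [edist_dist, edist_dist, Real.coe_toNNReal _ hγ0.le,
    ENNReal.ofReal_rpow_of_nonneg dist_nonneg hγ0.le]
  refine (ENNReal.ofReal_le_ofReal (hdist.trans_eq ?_)).trans_eq
    (ENNReal.ofReal_mul (inv_nonneg.2 (Real.rpow_nonneg hc.le _)))
  rw [Real.div_rpow dist_nonneg hc.le, div_eq_inv_mul]

theorem ofReal_le_dimH_liYorkePairs (ha : 1 < a) {Λ : Set ℝ} (hΛc : IsClosed Λ)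
    (hΛne : Λ.Nonempty) (hΛ : ∀ b, MapsTo (ifsMap (2 * a)⁻¹ b) Λ Λ) {t : ℝ}
    (ht : t < 2 * Real.log 2 / Real.log (2 * a)) :
    ENNReal.ofReal t ≤ dimH (liYorkePairs (tentMap a) Λ) := by
  rcases le_or_gt t 0 with ht0 | ht0
  · simp [ENNReal.ofReal_of_nonpos ht0]
  have hlog2a : 0 < Real.log (2 * a) := Real.log_pos (by linarith)
  have hr2 : (2 * a)⁻¹ < 1 / 2 := by
    rw [inv_lt_comm₀ (by positivity) (by norm_num)]; linarith
  -- the free positions must have density `θ` for a Hölder inverse with exponent `t / 2`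
  set θ := t * Real.log (2 * a) / (2 * Real.log 2) with hθdef
  have hθ : θ < 1 := by
    rw [div_lt_one (by positivity)]
    rwa [lt_div_iff₀ hlog2a] at ht
  obtain ⟨N, hN, hθN⟩ := exists_forall_mul_le_freeCount hθ
  have hγ : t / 2 * Real.log (2 * a)⁻¹⁻¹ = θ * Real.log 2 := by
    rw [inv_inv, hθdef]; field_simp
  set Q : Set (ℝ × ℝ) := Ico 0 1 ×ˢ Ico 0 1
  have hdim := dimH_le_dimH_image_div_of_edist_le (Real.toNNReal_pos.2 (half_pos ht0))
    fun p hp q hq => edist_le_mul_edist_pairEmbedding_rpow (by positivity) hr2 hθN (half_pos ht0)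
      hγ hp hq
  have hint : (interior Q).Nonempty := by
    rw [interior_prod_eq, interior_Ico]
    exact ⟨(1 / 2, 1 / 2), by norm_num, by norm_num⟩
  rw [Real.dimH_of_nonempty_interior hint] at hdim
  calc ENNReal.ofReal t = 2 * ((t / 2).toNNReal : ℝ≥0∞) := by
        change ENNReal.ofReal t = 2 * ENNReal.ofReal (t / 2)
        rw [← ENNReal.ofReal_ofNat 2, ← ENNReal.ofReal_mul zero_le_two,
          mul_div_cancel₀ t two_ne_zero]
    _ ≤ dimH (pairEmbedding (2 * a)⁻¹ N '' Q) := (ENNReal.le_div_iff_mul_le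
        (Or.inl (by simpa using ht0)) (Or.inl ENNReal.coe_ne_top)).1 (by simpa using hdim)
    _ ≤ dimH (liYorkePairs (tentMap a) Λ) := dimH_mono (image_subset_iff.2 fun p _ =>
        pairEmbedding_mem_liYorkePairs ha hΛc hΛne hΛ hN p)

theorem dimH_prod_self_le (hr0 : 0 < r) (hr1 : r < 1) {Λ : Set ℝ} (hΛb : Bornology.IsBounded Λ)
    (hΛ : Λ ⊆ ⋃ b, ifsMap r b '' Λ) :
    dimH (Λ ×ˢ Λ) ≤ ENNReal.ofReal (2 * Real.log 2 / Real.log r⁻¹) := by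
  have hf : ∀ b : Bool × Bool, LipschitzWith r.toNNReal (Prod.map (ifsMap r b.1) (ifsMap r b.2)) :=
    fun b => by
      have h := ((lipschitzWith_ifsMap hr0.le b.1).comp LipschitzWith.prod_fst).prodMk
        ((lipschitzWith_ifsMap hr0.le b.2).comp LipschitzWith.prod_snd)
      rw [mul_one, max_self] at h
      exact h
  have hcover : Λ ×ˢ Λ ⊆ ⋃ b : Bool × Bool, Prod.map (ifsMap r b.1) (ifsMap r b.2) '' Λ ×ˢ Λ := by
    rintro ⟨x, y⟩ ⟨hx, hy⟩
    obtain ⟨b, x', hx', rfl⟩ : ∃ b, ∃ x' ∈ Λ, ifsMap r b x' = x := by simpa using hΛ hx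
    obtain ⟨c, y', hy', rfl⟩ : ∃ c, ∃ y' ∈ Λ, ifsMap r c y' = y := by simpa using hΛ hy
    exact mem_iUnion.2 ⟨(b, c), (x', y'), ⟨hx', hy'⟩, rfl⟩
  have := dimH_le_of_subset_iUnion_image (hΛb.prod hΛb).ediam_ne_top
    (Real.toNNReal_pos.2 hr0) (Real.toNNReal_lt_one.2 hr1) hf hcover
  rwa [Real.coe_toNNReal r hr0.le, Fintype.card_prod, Fintype.card_bool,
    show ((2 * 2 : ℕ) : ℝ) = 2 ^ 2 by norm_num, Real.log_pow, Nat.cast_ofNat] at this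

end TentAttractor

open TentAttractor in
/-- Let `a > 1` and let `t(x) = a − 2a|x − 1/2|` be the expansive tent
map. Let `Λ` be the attractor of the IFS `T₁ x = x/(2a)`, `T₂ x = 1 − x/(2a)`. Then `Λ`
is invariant under `t` and the Li-Yorke pairs of `t` in `Λ` have full Hausdorff
dimension: `dim_H LY_t(Λ) = dim_H (Λ × Λ) = 2 log 2 / log (2a)`. -/
theorem dimH_liYorkePairs_tent_map (a : ℝ) (ha : 1 < a)
    (Λ : Set ℝ) (hΛc : IsCompact Λ) (hΛne : Λ.Nonempty)
    (hΛ : Λ = (fun x => x / (2 * a)) '' Λ ∪ (fun x => 1 - x / (2 * a)) '' Λ) :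
    (fun x => a - 2 * a * |x - 1 / 2|) '' Λ = Λ ∧
    dimH (liYorkePairs (fun x => a - 2 * a * |x - 1 / 2|) Λ) = dimH (Λ ×ˢ Λ) ∧
    dimH (Λ ×ˢ Λ) = ENNReal.ofReal (2 * Real.log 2 / Real.log (2 * a)) := by
  have hr0 : 0 < (2 * a)⁻¹ := by positivity
  have hr1 : (2 * a)⁻¹ < 1 := inv_lt_one_of_one_lt₀ (by linarith)
  have hΛ' : Λ = ⋃ b, ifsMap (2 * a)⁻¹ b '' Λ := by
    conv_lhs => rw [hΛ]
    ext x
    simp [ifsMap, div_eq_inv_mul, Bool.exists_bool]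
  have hmaps : ∀ b, MapsTo (ifsMap (2 * a)⁻¹ b) Λ Λ := fun b x hx => by
    rw [hΛ']; exact mem_iUnion.2 ⟨b, mem_image_of_mem _ hx⟩
  have hΛI : Λ ⊆ Icc 0 1 := hΛc.isBounded.subset_of_subset_iUnion_image isClosed_Icc
    (nonempty_Icc.2 zero_le_one) (Real.toNNReal_lt_one.2 hr1) (lipschitzWith_ifsMap hr0.le)
    (mapsTo_ifsMap_Icc hr0.le hr1.le) hΛ'.subset
  have hupper : dimH (Λ ×ˢ Λ) ≤ ENNReal.ofReal (2 * Real.log 2 / Real.log (2 * a)) := by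
    simpa using dimH_prod_self_le hr0 hr1 hΛc.isBounded hΛ'.subset
  have hlower : ENNReal.ofReal (2 * Real.log 2 / Real.log (2 * a)) ≤
      dimH (liYorkePairs (tentMap a) Λ) := ENNReal.ofReal_le_of_forall_lt fun t ht =>
    ofReal_le_dimH_liYorkePairs ha hΛc.isClosed hΛne hmaps ht
  have hmono : dimH (liYorkePairs (tentMap a) Λ) ≤ dimH (Λ ×ˢ Λ) :=
    dimH_mono fun p hp => ⟨hp.1, hp.2.1⟩
  exact ⟨image_tentMap_eq (by linarith) (fun y hy => (hΛI hy).2.trans ha.le) hΛ',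
    le_antisymm hmono (hupper.trans hlower), le_antisymm hupper (hlower.trans hmono)⟩

end
end

section
/- Let S_1,…,S_m (m ≥ 2) be contracting similitudes of ℝ^w with ratios c_i ∈ (0,1), let K ⊆ ℝ^w be compact with S_i(K) ⊆ K for all i and S_i(K) ∩ S_j(K) = ∅ for i ≠ j, let π be the coding map and D the solution of Σ_{i=1}^m c_i^D = 1. Let s ∈ Σ and let N = (N_n) be a sequence of positive integers with lim_{M→∞} M² / (Σ_{n=1}^M N_n) = 0. Let ν be the Bernoulli (infinite product) measure on Σ with weights (c_1^D, …, c_m^D), let pr : Σ → Σ_N(s) be the bijection that fills the unconstrained positions of sequences in Σ_N(s) successively with the digits of its argument, and let μ = ν ∘ pr^{-1} ∘ π^{-1} be the pushforward of ν to Λ_N(s) = π(Σ_N(s)). Then for every x ∈ Λ_N(s), liminf_{ρ→0} log μ(B_ρ(x)) / log ρ ≥ D, where B_ρ(x) is the ball of radius ρ around x. -/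
open Filter Set MeasureTheory

noncomputable section

/-- `S_{s_1} ∘ ⋯ ∘ S_{s_{n+1}}` in the paper's `1`-based indexing. -/
def iterComp {m : ℕ} {E : Type*} (S : Fin m → E → E) (s : ℕ → Fin m) : ℕ → E → E
  | 0 => S (s 0)
  | n + 1 => iterComp S s n ∘ S (s (n + 1))

def constrainedPos (N : ℕ → ℕ) (k : ℕ) : Prop :=
  ∃ i, uSeq N i ≤ k ∧ k ≤ uSeq N i + i + 1

def flipPos (N : ℕ → ℕ) (k : ℕ) : Prop :=
  ∃ i, k = uSeq N i + i + 1

open Classical in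
/-- The bijection `pr : Σ → Σ_N(s)`. -/
def prMap {m : ℕ} (s : ℕ → Fin m) (N : ℕ → ℕ) (a : ℕ → Fin m) : ℕ → Fin m :=
  fun k =>
    if flipPos N k then succDigit (s k)
    else if constrainedPos N k then s k
    else a (Nat.count (fun j => ¬ constrainedPos N j) k)

/-!
Write `P n = c (t 0) ⋯ c (t (n - 1))`. Strong separation makes the ball of radius `ρ ≈ P n`
around `π t` comparable with the image of the `n`-cylinder of `t`, so it suffices to compare
the mass of that cylinder with `P n ^ D`. Its preimage under `pr` is a cylinder that only sees
the free positions, so its `ν`-mass is `P n ^ D` with the factors `c (t k) ^ D` at constrained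
positions `k < n` removed. The growth condition on `N` makes these positions `o(n)`, and
`P n` decays exponentially, so the mass lies between `P n ^ D` and `P n ^ d` for every `d < D`.
-/

open Topology PiNat

theorem tendsto_log_mul_rpow_div_log {C : ℝ} (hC : 0 < C) (a : ℝ) :
    Tendsto (fun ρ => Real.log (C * ρ ^ a) / Real.log ρ) (𝓝[>] 0) (𝓝 a) := by
  have hlog := Real.tendsto_log_nhdsGT_zero
  have h := (hlog.const_div_atBot (Real.log C)).const_add a
  rw [add_zero] at h
  refine h.congr' ?_
  filter_upwards [self_mem_nhdsWithin, hlog.eventually_lt_atBot 0] with ρ hρ hρ'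
  rw [Real.log_mul hC.ne' (Real.rpow_pos_of_pos hρ a).ne', Real.log_rpow hρ, add_div,
    mul_div_cancel_right₀ _ hρ'.ne, add_comm]

theorem le_liminf_log_div_log {g : ℝ → ℝ} {a D : ℝ} (hD : 0 < D)
    (hlow : ∃ C > 0, ∀ᶠ ρ in 𝓝[>] 0, C * ρ ^ a ≤ g ρ)
    (hup : ∀ d ∈ Set.Ioo 0 D, ∃ C > 0, ∀ᶠ ρ in 𝓝[>] 0, g ρ ≤ C * ρ ^ d) :
    D ≤ liminf (fun ρ => Real.log (g ρ) / Real.log ρ) (𝓝[>] 0) := by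
  have hlog_neg : ∀ᶠ ρ in 𝓝[>] (0 : ℝ), Real.log ρ < 0 :=
    Real.tendsto_log_nhdsGT_zero.eventually_lt_atBot 0
  obtain ⟨C, hC, hCa⟩ := hlow
  have hg : ∀ᶠ ρ in 𝓝[>] 0, 0 < g ρ := by
    filter_upwards [hCa, self_mem_nhdsWithin] with ρ h hρ
    exact lt_of_lt_of_le (mul_pos hC (Real.rpow_pos_of_pos hρ a)) h
  have hbdd : ∀ᶠ ρ in 𝓝[>] 0, Real.log (g ρ) / Real.log ρ ≤ a + 1 := by
    filter_upwards [hCa, self_mem_nhdsWithin, hlog_neg,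
      (tendsto_log_mul_rpow_div_log hC a).eventually (gt_mem_nhds (lt_add_one a))]
      with ρ h hρ hρ' h1
    refine (div_le_div_of_nonpos_of_le hρ'.le (Real.log_le_log ?_ h)).trans h1.le
    exact mul_pos hC (Real.rpow_pos_of_pos hρ a)
  refine le_of_forall_lt_imp_le_of_dense fun d' hd' => ?_
  obtain ⟨d, hd'd, hdD⟩ := exists_between (max_lt hd' hD)
  obtain ⟨C', hC', hC'd⟩ := hup d ⟨(le_max_right _ _).trans_lt hd'd, hdD⟩
  refine le_liminf_of_le (isCoboundedUnder_ge_of_eventually_le _ hbdd) ?_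
  filter_upwards [hC'd, hg, hlog_neg, (tendsto_log_mul_rpow_div_log hC' d).eventually
    (lt_mem_nhds ((le_max_left _ _).trans_lt hd'd))] with ρ h hgρ hρ' h1
  exact h1.le.trans (div_le_div_of_nonpos_of_le hρ'.le (Real.log_le_log hgρ h))

theorem exists_lt_le_of_tendsto_zero {P : ℕ → ℝ} (hP : Tendsto P atTop (𝓝 0)) {ρ : ℝ}
    (hρ : 0 < ρ) (hρP : ρ ≤ P 0) : ∃ n, P (n + 1) < ρ ∧ ρ ≤ P n := by
  have hex : ∃ n, P n < ρ := (hP.eventually (gt_mem_nhds hρ)).exists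
  have hfind : Nat.find hex ≠ 0 := fun h => (Nat.find_spec hex).not_ge (h ▸ hρP)
  refine ⟨Nat.find hex - 1, ?_, not_lt.1 (Nat.find_min hex (by omega))⟩
  rw [Nat.sub_add_cancel (Nat.pos_of_ne_zero hfind)]
  exact Nat.find_spec hex

theorem exists_pos_le_dist_of_pairwise_disjoint {ι E : Type*} [Finite ι] [MetricSpace E]
    {A : ι → Set E} (hA : ∀ i, IsCompact (A i)) (hd : ∀ i j, i ≠ j → Disjoint (A i) (A j)) :
    ∃ δ > 0, ∀ i j, i ≠ j → ∀ p ∈ A i, ∀ q ∈ A j, δ ≤ dist p q := by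
  have h : ∀ i j, ∀ᶠ δ in 𝓝[>] (0 : ℝ), i ≠ j → ∀ p ∈ A i, ∀ q ∈ A j, δ ≤ dist p q := by
    intro i j
    by_cases hij : i = j
    · exact Eventually.of_forall fun _ h => absurd hij h
    obtain ⟨r, hr, hrd⟩ := Metric.exists_pos_forall_lt_edist (hA i) (hA j).isClosed (hd i j hij)
    filter_upwards [Ioo_mem_nhdsGT (show (0 : ℝ) < r from hr)] with δ hδ _ p hp q hq
    have hrpq := hrd p hp q hq
    rw [edist_dist, ← ENNReal.ofReal_coe_nnreal, ENNReal.ofReal_lt_ofReal_iff'] at hrpq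
    exact hδ.2.le.trans hrpq.1.le
  obtain ⟨δ, hδ, hpos⟩ :=
    ((eventually_all.2 fun i => eventually_all.2 (h i)).and self_mem_nhdsWithin).exists
  exact ⟨δ, hpos, hδ⟩

section CodingMap

variable {m : ℕ} {E : Type*} {S : Fin m → E → E} {c : Fin m → ℝ} {K : Set E}
  {π : (ℕ → Fin m) → E}

theorem iterComp_congr {s t : ℕ → Fin m} {n : ℕ} (h : s ∈ cylinder t (n + 1)) :
    iterComp S s n = iterComp S t n := by
  induction n with
  | zero => simp [iterComp, h 0 (by omega)]
  | succ n ih =>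
    simp only [iterComp, h (n + 1) (by omega), ih (cylinder_anti _ (by omega) h)]

theorem iterComp_succ (s : ℕ → Fin m) (n : ℕ) :
    iterComp S s (n + 1) = S (s 0) ∘ iterComp S (fun k => s (k + 1)) n := by
  induction n with
  | zero => rfl
  | succ n ih => simp only [iterComp] at ih ⊢; rw [ih]; rfl

theorem image_iterComp_subset (hSK : ∀ i, S i '' K ⊆ K) (s : ℕ → Fin m) (n : ℕ) :
    iterComp S s n '' K ⊆ K := by
  induction n with
  | zero => exact hSK (s 0)
  | succ n ih => rw [iterComp, Set.image_comp]; exact (Set.image_mono (hSK _)).trans ih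

theorem coding_mem_image (hπ : ∀ s, (⋂ n, iterComp S s n '' K) = {π s}) (s : ℕ → Fin m)
    (n : ℕ) : π s ∈ iterComp S s n '' K :=
  Set.mem_iInter.1 ((hπ s).symm ▸ rfl : π s ∈ ⋂ n, iterComp S s n '' K) n

theorem coding_mem (hSK : ∀ i, S i '' K ⊆ K) (hπ : ∀ s, (⋂ n, iterComp S s n '' K) = {π s})
    (s : ℕ → Fin m) : π s ∈ K :=
  image_iterComp_subset hSK s 0 (coding_mem_image hπ s 0)

theorem coding_eq_apply_coding_shift (hSK : ∀ i, S i '' K ⊆ K)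
    (hπ : ∀ s, (⋂ n, iterComp S s n '' K) = {π s}) (s : ℕ → Fin m) :
    π s = S (s 0) (π fun k => s (k + 1)) := by
  have hmem : S (s 0) (π fun k => s (k + 1)) ∈ ⋂ n, iterComp S s n '' K := by
    refine Set.mem_iInter.2 fun n => ?_
    cases n with
    | zero => exact Set.mem_image_of_mem _ (coding_mem hSK hπ _)
    | succ n =>
      rw [iterComp_succ, Set.image_comp]
      exact Set.mem_image_of_mem _ (coding_mem_image hπ _ n)
  rw [hπ s] at hmem
  exact hmem.symm

variable [MetricSpace E]

theorem dist_iterComp (hS : ∀ i x y, dist (S i x) (S i y) = c i * dist x y)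
    (s : ℕ → Fin m) (n : ℕ) (x y : E) :
    dist (iterComp S s n x) (iterComp S s n y) =
      (∏ k ∈ Finset.range (n + 1), c (s k)) * dist x y := by
  induction n generalizing x y with
  | zero => simp [iterComp, hS]
  | succ n ih =>
    simp only [iterComp, Function.comp_apply, ih, hS, Finset.prod_range_succ _ (n + 1)]
    ring

theorem dist_coding_le_of_mem_cylinder (hc : ∀ i, 0 ≤ c i)
    (hS : ∀ i x y, dist (S i x) (S i y) = c i * dist x y) (hK : Bornology.IsBounded K)
    (hSK : ∀ i, S i '' K ⊆ K) (hπ : ∀ s, (⋂ n, iterComp S s n '' K) = {π s})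
    {s t : ℕ → Fin m} {n : ℕ} (hst : s ∈ cylinder t n) :
    dist (π s) (π t) ≤ (∏ k ∈ Finset.range n, c (t k)) * Metric.diam K := by
  cases n with
  | zero =>
    simpa using Metric.dist_le_diam_of_mem hK (coding_mem hSK hπ s) (coding_mem hSK hπ t)
  | succ n =>
    obtain ⟨x, hx, hxs⟩ := coding_mem_image hπ s n
    obtain ⟨y, hy, hyt⟩ := coding_mem_image hπ t n
    rw [← hxs, ← hyt, iterComp_congr hst, dist_iterComp hS]
    exact mul_le_mul_of_nonneg_left (Metric.dist_le_diam_of_mem hK hx hy)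
      (Finset.prod_nonneg fun k _ => hc _)

theorem le_dist_coding_of_mem_cylinder (hc : ∀ i, 0 ≤ c i)
    (hS : ∀ i x y, dist (S i x) (S i y) = c i * dist x y) (hSK : ∀ i, S i '' K ⊆ K)
    (hπ : ∀ s, (⋂ n, iterComp S s n '' K) = {π s}) {δ : ℝ}
    (hδ : ∀ i j, i ≠ j → ∀ p ∈ S i '' K, ∀ q ∈ S j '' K, δ ≤ dist p q) (n : ℕ)
    {s t : ℕ → Fin m} (hst : s ∈ cylinder t n) (hn : s n ≠ t n) :
    δ * ∏ k ∈ Finset.range n, c (t k) ≤ dist (π s) (π t) := by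
  induction n generalizing s t with
  | zero =>
    simpa using hδ _ _ hn _ (coding_mem_image hπ s 0) _ (coding_mem_image hπ t 0)
  | succ n ih =>
    have hshift : (fun k => s (k + 1)) ∈ cylinder (fun k => t (k + 1)) n :=
      fun k hk => hst (k + 1) (by omega)
    rw [coding_eq_apply_coding_shift hSK hπ s, coding_eq_apply_coding_shift hSK hπ t,
      hst 0 (by omega), hS, Finset.prod_range_succ', mul_comm _ (c (t 0)), ← mul_assoc,
      mul_comm δ, mul_assoc]
    exact mul_le_mul_of_nonneg_left (ih hshift hn) (hc _)

theorem tendsto_prod_range_zero (hc : ∀ i, c i ∈ Set.Ioo (0 : ℝ) 1) (t : ℕ → Fin m) :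
    Tendsto (fun n => ∏ k ∈ Finset.range n, c (t k)) atTop (𝓝 0) := by
  have : Nonempty (Fin m) := ⟨t 0⟩
  obtain ⟨i₁, hi₁⟩ := Finite.exists_max c
  refine squeeze_zero (fun n => Finset.prod_nonneg fun k _ => (hc _).1.le) (fun n => ?_)
    (tendsto_pow_atTop_nhds_zero_of_lt_one (hc i₁).1.le (hc i₁).2)
  exact (Finset.prod_le_prod (fun k _ => (hc _).1.le) fun k _ => hi₁ _).trans_eq (by simp)

theorem continuous_coding (hc : ∀ i, c i ∈ Set.Ioo (0 : ℝ) 1)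
    (hS : ∀ i x y, dist (S i x) (S i y) = c i * dist x y) (hK : Bornology.IsBounded K)
    (hSK : ∀ i, S i '' K ⊆ K) (hπ : ∀ s, (⋂ n, iterComp S s n '' K) = {π s}) :
    Continuous π := by
  refine continuous_iff_continuousAt.2 fun t => Metric.tendsto_nhds.2 fun ε hε => ?_
  obtain ⟨n, hn⟩ := (((tendsto_prod_range_zero hc t).mul_const (Metric.diam K)).eventually
    (gt_mem_nhds (by rwa [zero_mul]))).exists
  filter_upwards [(isOpen_cylinder _ t n).mem_nhds (self_mem_cylinder t n)] with s hs
  exact (dist_coding_le_of_mem_cylinder (fun i => (hc i).1.le) hS hK hSK hπ hs).trans_lt hn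

theorem cylinder_subset_preimage_ball (hc : ∀ i, 0 ≤ c i)
    (hS : ∀ i x y, dist (S i x) (S i y) = c i * dist x y) (hK : Bornology.IsBounded K)
    (hSK : ∀ i, S i '' K ⊆ K) (hπ : ∀ s, (⋂ n, iterComp S s n '' K) = {π s})
    {t : ℕ → Fin m} {n : ℕ} {ρ : ℝ} (hρ : (∏ k ∈ Finset.range n, c (t k)) * Metric.diam K < ρ) :
    cylinder t n ⊆ π ⁻¹' Metric.ball (π t) ρ :=
  fun _ hs => (dist_coding_le_of_mem_cylinder hc hS hK hSK hπ hs).trans_lt hρ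

theorem preimage_ball_subset_cylinder (hc : ∀ i, c i ∈ Set.Ioo (0 : ℝ) 1)
    (hS : ∀ i x y, dist (S i x) (S i y) = c i * dist x y) (hSK : ∀ i, S i '' K ⊆ K)
    (hπ : ∀ s, (⋂ n, iterComp S s n '' K) = {π s}) {δ : ℝ}
    (hδ : ∀ i j, i ≠ j → ∀ p ∈ S i '' K, ∀ q ∈ S j '' K, δ ≤ dist p q)
    {t : ℕ → Fin m} {n : ℕ} {ρ : ℝ} (hρ : ρ ≤ δ * ∏ k ∈ Finset.range n, c (t k)) :
    π ⁻¹' Metric.ball (π t) ρ ⊆ cylinder t n := by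
  intro s hs
  by_contra hst
  have hne : s ≠ t := fun h => hst (h ▸ self_mem_cylinder s n)
  have hlt : firstDiff s t < n := not_le.1 fun h => hst ((mem_cylinder_iff_le_firstDiff hne n).2 h)
  have hsep := le_dist_coding_of_mem_cylinder (fun i => (hc i).1.le) hS hSK hπ hδ _
    (mem_cylinder_firstDiff s t) (apply_firstDiff_ne hne)
  have hanti : ∏ k ∈ Finset.range n, c (t k) ≤ ∏ k ∈ Finset.range (firstDiff s t), c (t k) :=
    Finset.prod_le_prod_of_subset_of_le_one (Finset.range_subset_range.2 hlt.le)
      (fun k _ => (hc _).1.le) fun k _ _ => (hc _).2.le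
  have hdist : dist (π s) (π t) < ρ := Metric.mem_ball.1 hs
  have hδ0 : 0 < δ := pos_of_mul_pos_left (dist_nonneg.trans_lt (hdist.trans_le hρ))
    (Finset.prod_nonneg fun k _ => (hc _).1.le)
  linarith [mul_le_mul_of_nonneg_left hanti hδ0.le]

theorem exists_mul_rpow_le_measureReal_preimage_ball (hc : ∀ i, c i ∈ Set.Ioo (0 : ℝ) 1)
    (hS : ∀ i x y, dist (S i x) (S i y) = c i * dist x y) (hK : Bornology.IsBounded K)
    (hSK : ∀ i, S i '' K ⊆ K) (hπ : ∀ s, (⋂ n, iterComp S s n '' K) = {π s})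
    {μ : Measure (ℕ → Fin m)} [IsFiniteMeasure μ] {t : ℕ → Fin m} {D : ℝ} (hD : 0 ≤ D)
    (hμ : ∀ n, (∏ k ∈ Finset.range n, c (t k)) ^ D ≤ μ.real (cylinder t n)) :
    ∃ C > 0, ∀ᶠ ρ in 𝓝[>] 0, C * ρ ^ D ≤ μ.real (π ⁻¹' Metric.ball (π t) ρ) := by
  have : Nonempty (Fin m) := ⟨t 0⟩
  obtain ⟨i₀, hi₀⟩ := Finite.exists_min c
  have hc₀ := (hc i₀).1
  set P := fun n => ∏ k ∈ Finset.range n, c (t k)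
  set A := Metric.diam K + 1
  have hA : 0 < A := by positivity
  refine ⟨(c i₀ / A) ^ D, by positivity, ?_⟩
  filter_upwards [Ioo_mem_nhdsGT hA] with ρ ⟨hρ, hρA⟩
  obtain ⟨n, hn, hn'⟩ := exists_lt_le_of_tendsto_zero (P := fun n => A * P n)
    (by simpa using (tendsto_prod_range_zero hc t).const_mul A) hρ (by simpa [P] using hρA.le)
  have hPn : c i₀ * ρ / A ≤ P (n + 1) := by
    rw [div_le_iff₀' hA]
    calc c i₀ * ρ ≤ c (t n) * (A * P n) :=
          mul_le_mul (hi₀ _) hn' hρ.le (hc _).1.le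
      _ = A * P (n + 1) := by simp only [P, Finset.prod_range_succ]; ring
  have hball : cylinder t (n + 1) ⊆ π ⁻¹' Metric.ball (π t) ρ :=
    cylinder_subset_preimage_ball (fun i => (hc i).1.le) hS hK hSK hπ <|
      (mul_le_mul_of_nonneg_left (show Metric.diam K ≤ A by linarith)
        (Finset.prod_nonneg fun k _ => (hc _).1.le)).trans_lt
        (by rwa [mul_comm] at hn)
  calc (c i₀ / A) ^ D * ρ ^ D = (c i₀ * ρ / A) ^ D := by
        rw [← Real.mul_rpow (by positivity) hρ.le, div_mul_eq_mul_div]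
    _ ≤ P (n + 1) ^ D := Real.rpow_le_rpow (by positivity) hPn hD
    _ ≤ μ.real (cylinder t (n + 1)) := hμ (n + 1)
    _ ≤ μ.real (π ⁻¹' Metric.ball (π t) ρ) := measureReal_mono hball

theorem exists_measureReal_preimage_ball_le_mul_rpow (hc : ∀ i, c i ∈ Set.Ioo (0 : ℝ) 1)
    (hS : ∀ i x y, dist (S i x) (S i y) = c i * dist x y) (hSK : ∀ i, S i '' K ⊆ K)
    (hπ : ∀ s, (⋂ n, iterComp S s n '' K) = {π s}) {δ : ℝ} (hδ : 0 < δ)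
    (hsep : ∀ i j, i ≠ j → ∀ p ∈ S i '' K, ∀ q ∈ S j '' K, δ ≤ dist p q)
    {μ : Measure (ℕ → Fin m)} [IsFiniteMeasure μ] {t : ℕ → Fin m} {d : ℝ} (hd : 0 ≤ d)
    (hμ : ∀ᶠ n in atTop, μ.real (cylinder t n) ≤ (∏ k ∈ Finset.range n, c (t k)) ^ d) :
    ∃ C > 0, ∀ᶠ ρ in 𝓝[>] 0, μ.real (π ⁻¹' Metric.ball (π t) ρ) ≤ C * ρ ^ d := by
  have : Nonempty (Fin m) := ⟨t 0⟩
  obtain ⟨i₀, hi₀⟩ := Finite.exists_min c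
  have hc₀ := (hc i₀).1
  set P := fun n => ∏ k ∈ Finset.range n, c (t k)
  have hP : ∀ n, 0 < P n := fun n => Finset.prod_pos fun k _ => (hc _).1
  have hP_anti : Antitone P :=
    (Finset.prod_anti_set_of_le_one (fun k => (hc (t k)).1.le) fun k => (hc (t k)).2.le
      ).comp_monotone Finset.range_mono
  obtain ⟨n₀, hn₀⟩ := eventually_atTop.1 hμ
  refine ⟨(δ * c i₀)⁻¹ ^ d, by positivity, ?_⟩
  filter_upwards [Ioo_mem_nhdsGT (mul_pos hδ (hP n₀))] with ρ ⟨hρ, hρn₀⟩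
  obtain ⟨n, hn, hn'⟩ := exists_lt_le_of_tendsto_zero (P := fun n => δ * P n)
    (by simpa using (tendsto_prod_range_zero hc t).const_mul δ) hρ
    (hρn₀.le.trans (mul_le_mul_of_nonneg_left (hP_anti (Nat.zero_le _)) hδ.le))
  have hn₀n : n₀ ≤ n := by
    by_contra h
    linarith [mul_le_mul_of_nonneg_left (hP_anti (show n + 1 ≤ n₀ by omega)) hδ.le]
  have hPn : P n ≤ (δ * c i₀)⁻¹ * ρ := by
    rw [inv_mul_eq_div, le_div_iff₀ (by positivity)]
    calc P n * (δ * c i₀) ≤ δ * P n * c (t n) := by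
          rw [mul_left_comm, ← mul_assoc]
          exact mul_le_mul_of_nonneg_left (hi₀ _) (mul_pos hδ (hP n)).le
      _ = δ * P (n + 1) := by simp only [P, Finset.prod_range_succ]; ring
      _ ≤ ρ := hn.le
  calc μ.real (π ⁻¹' Metric.ball (π t) ρ) ≤ μ.real (cylinder t n) :=
        measureReal_mono (preimage_ball_subset_cylinder hc hS hSK hπ hsep hn')
    _ ≤ P n ^ d := hn₀ n hn₀n
    _ ≤ ((δ * c i₀)⁻¹ * ρ) ^ d := Real.rpow_le_rpow (hP n).le hPn hd
    _ = (δ * c i₀)⁻¹ ^ d * ρ ^ d := Real.mul_rpow (by positivity) hρ.le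

variable [MeasurableSpace E] [BorelSpace E]

theorem le_liminf_log_measure_ball_div_log (hc : ∀ i, c i ∈ Set.Ioo (0 : ℝ) 1)
    (hS : ∀ i x y, dist (S i x) (S i y) = c i * dist x y) (hKc : IsCompact K)
    (hSK : ∀ i, S i '' K ⊆ K) (hdisj : ∀ i j, i ≠ j → Disjoint (S i '' K) (S j '' K))
    (hπ : ∀ s, (⋂ n, iterComp S s n '' K) = {π s})
    {μ : Measure (ℕ → Fin m)} [IsFiniteMeasure μ] {t : ℕ → Fin m} {D : ℝ} (hD : 0 < D)
    (hlow : ∀ n, (∏ k ∈ Finset.range n, c (t k)) ^ D ≤ μ.real (cylinder t n))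
    (hup : ∀ d ∈ Set.Ioo 0 D,
      ∀ᶠ n in atTop, μ.real (cylinder t n) ≤ (∏ k ∈ Finset.range n, c (t k)) ^ d) :
    D ≤ liminf (fun ρ => Real.log ((μ.map π) (Metric.ball (π t) ρ)).toReal / Real.log ρ)
      (𝓝[>] 0) := by
  have hπm : Measurable π := (continuous_coding hc hS hKc.isBounded hSK hπ).measurable
  have hScont : ∀ i, Continuous (S i) := fun i =>
    (LipschitzWith.of_dist_le' fun x y => (hS i x y).le).continuous
  obtain ⟨δ, hδ, hsep⟩ :=
    exists_pos_le_dist_of_pairwise_disjoint (fun i => hKc.image (hScont i)) hdisj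
  have hball : ∀ ρ, ((μ.map π) (Metric.ball (π t) ρ)).toReal =
      μ.real (π ⁻¹' Metric.ball (π t) ρ) := fun ρ =>
    map_measureReal_apply hπm measurableSet_ball
  simp only [hball]
  exact le_liminf_log_div_log hD
    (exists_mul_rpow_le_measureReal_preimage_ball hc hS hKc.isBounded hSK hπ hD.le hlow)
    fun d hd => exists_measureReal_preimage_ball_le_mul_rpow hc hS hSK hπ hδ hsep hd.1.le (hup d hd)

end CodingMap

section Weights

theorem rpow_prod_le_prod_filter_rpow {ι : Type*} (s : Finset ι) (q : ι → Prop)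
    [DecidablePred q] {f : ι → ℝ} (hf0 : ∀ i, 0 ≤ f i) (hf1 : ∀ i, f i ≤ 1) {D : ℝ}
    (hD : 0 ≤ D) : (∏ i ∈ s, f i) ^ D ≤ ∏ i ∈ s.filter q, f i ^ D := by
  rw [← Real.finsetProd_rpow _ _ fun i _ => hf0 i]
  exact Finset.prod_le_prod_of_subset_of_le_one (Finset.filter_subset _ _)
    (fun i _ => Real.rpow_nonneg (hf0 i) D) fun i _ _ => Real.rpow_le_one (hf0 i) (hf1 i) hD

theorem eventually_prod_filter_not_rpow_le {f : ℕ → ℝ} {p : ℕ → Prop} [DecidablePred p]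
    {a b : ℝ} (ha : 0 < a) (hb : b < 1) (hfa : ∀ k, a ≤ f k) (hfb : ∀ k, f k ≤ b)
    (hp : ∀ ε > 0, ∀ᶠ n in atTop, (Nat.count p n : ℝ) ≤ ε * n) {D d : ℝ} (hD : 0 < D)
    (hd : d < D) :
    ∀ᶠ n in atTop,
      ∏ k ∈ (Finset.range n).filter (fun k => ¬ p k), f k ^ D ≤
        (∏ k ∈ Finset.range n, f k) ^ d := by
  have hf : ∀ k, 0 < f k := fun k => ha.trans_le (hfa k)
  have hloga : Real.log a < 0 := Real.log_neg ha ((hfa 0).trans (hfb 0) |>.trans_lt hb)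
  have hlogb : Real.log b < 0 := Real.log_neg (ha.trans_le ((hfa 0).trans (hfb 0))) hb
  -- at density `≤ ε` of `p`, the missing factors `f k ^ D` weigh less than `(∏ f k) ^ (D - d)`
  set ε := (D - d) * Real.log b / (D * Real.log a) with hε
  have hε_pos : 0 < ε := div_pos_of_neg_of_neg (mul_neg_of_pos_of_neg (sub_pos.2 hd) hlogb)
    (mul_neg_of_pos_of_neg hD hloga)
  filter_upwards [hp ε hε_pos] with n hn
  have hεD : D * Real.log a * (ε * n) = (D - d) * (n * Real.log b) := by
    rw [hε]; field_simp [hloga.ne]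
  set σ := ∑ k ∈ Finset.range n, Real.log (f k)
  set τ := ∑ k ∈ (Finset.range n).filter p, Real.log (f k)
  have hσ : σ ≤ n * Real.log b := by
    simpa using Finset.sum_le_card_nsmul (Finset.range n) _ _ fun k _ =>
      Real.log_le_log (hf k) (hfb k)
  have hτ : Nat.count p n * Real.log a ≤ τ := by
    simpa [Nat.count_eq_card_filter_range] using
      Finset.card_nsmul_le_sum _ _ _ fun k _ => Real.log_le_log ha (hfa k)
  have hsplit : ∑ k ∈ (Finset.range n).filter (fun k => ¬ p k), Real.log (f k) = σ - τ := by
    rw [eq_sub_iff_add_eq, add_comm, Finset.sum_filter_add_sum_filter_not]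
  have hP : 0 < ∏ k ∈ Finset.range n, f k := Finset.prod_pos fun k _ => hf k
  rw [← Real.log_le_log_iff (Finset.prod_pos fun k _ => Real.rpow_pos_of_pos (hf k) D)
    (Real.rpow_pos_of_pos hP d), Real.log_prod fun k _ => (Real.rpow_pos_of_pos (hf k) D).ne',
    Real.log_rpow hP, Real.log_prod fun k _ => (hf k).ne']
  simp only [Real.log_rpow (hf _)]
  rw [← Finset.mul_sum, hsplit]
  change D * (σ - τ) ≤ d * σ
  have h₁ := mul_le_mul_of_nonneg_left hσ (sub_pos.2 hd).le
  have h₂ := mul_le_mul_of_nonneg_left hτ hD.le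
  have h₃ := mul_le_mul_of_nonpos_left hn (mul_neg_of_pos_of_neg hD hloga).le
  linarith

end Weights

section Constraints

theorem uSeq_strictMono (N : ℕ → ℕ) : StrictMono (uSeq N) :=
  strictMono_nat_of_lt_succ fun i => by simp only [uSeq]; omega

theorem sum_le_uSeq (N : ℕ → ℕ) (M : ℕ) : ∑ j ∈ Finset.range M, N j ≤ uSeq N M := by
  induction M with
  | zero => simp [uSeq]
  | succ M ih => rw [Finset.sum_range_succ, uSeq]; omega

theorem not_constrainedPos_uSeq_add (N : ℕ → ℕ) (hN : ∀ n, 0 < N n) (i : ℕ) :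
    ¬ constrainedPos N (uSeq N i + i + 2) := by
  rintro ⟨j, hj, hj'⟩
  rcases le_or_gt j i with hji | hij
  · have := (uSeq_strictMono N).monotone hji
    omega
  · have hij' := (uSeq_strictMono N).monotone (Nat.succ_le_of_lt hij)
    have := hN i
    simp only [uSeq] at hij'
    omega

theorem infinite_setOf_not_constrainedPos (N : ℕ → ℕ) (hN : ∀ n, 0 < N n) :
    {k | ¬ constrainedPos N k}.Infinite :=
  Set.infinite_of_forall_exists_gt fun a =>
    ⟨uSeq N a + a + 2, not_constrainedPos_uSeq_add N hN a,
      by have := (uSeq_strictMono N).id_le a; omega⟩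

open Classical in
theorem count_constrainedPos_uSeq_le (N : ℕ → ℕ) (M : ℕ) :
    Nat.count (constrainedPos N) (uSeq N M) ≤ M * (M + 1) := by
  have hsub : (Finset.range (uSeq N M)).filter (constrainedPos N) ⊆
      (Finset.range M).biUnion fun i => Finset.Icc (uSeq N i) (uSeq N i + i + 1) := by
    intro k hk
    obtain ⟨hkM, i, hik, hki⟩ := by simpa using hk
    simp only [Finset.mem_biUnion, Finset.mem_range, Finset.mem_Icc]
    exact ⟨i, (uSeq_strictMono N).lt_iff_lt.1 (by omega), hik, hki⟩
  rw [Nat.count_eq_card_filter_range]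
  refine (Finset.card_le_card hsub).trans
    ((Finset.card_biUnion_le_card_mul _ _ (M + 1) ?_).trans ?_)
  · intro i hi
    rw [Nat.card_Icc]
    have := Finset.mem_range.1 hi
    omega
  · simp

open Classical in
theorem eventually_count_constrainedPos_le (N : ℕ → ℕ) (hNpos : ∀ n, 0 < N n)
    (hN : Tendsto (fun M : ℕ => (M : ℝ) ^ 2 / ∑ n ∈ Finset.range M, (N n : ℝ))
      atTop (𝓝 0)) {ε : ℝ} (hε : 0 < ε) :
    ∀ᶠ n in atTop, (Nat.count (constrainedPos N) n : ℝ) ≤ ε * n := by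
  obtain ⟨M₀, hM₀⟩ := eventually_atTop.1 <|
    (hN.eventually (ge_mem_nhds (by positivity : 0 < ε / 6))).and (eventually_ge_atTop 1)
  filter_upwards [eventually_gt_atTop (uSeq N M₀)] with n hn
  obtain ⟨M, hMn, hnM⟩ := (uSeq_strictMono N).exists_between_of_tendsto_atTop
    (uSeq_strictMono N).tendsto_atTop (lt_of_le_of_lt (Nat.zero_le _) hn)
  obtain ⟨hratio, hM1⟩ :=
    hM₀ M (Nat.lt_succ_iff.1 ((uSeq_strictMono N).lt_iff_lt.1 (hn.trans_le hnM)))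
  have hsum_pos : 0 < ∑ j ∈ Finset.range M, (N j : ℝ) :=
    Finset.sum_pos (fun j _ => by exact_mod_cast hNpos j) (by simp; omega)
  have hcount : Nat.count (constrainedPos N) n ≤ (M + 1) * (M + 2) :=
    (Nat.count_monotone _ hnM).trans (count_constrainedPos_uSeq_le N (M + 1))
  have hsum : ∑ j ∈ Finset.range M, (N j : ℝ) ≤ n := by
    exact_mod_cast (sum_le_uSeq N M).trans hMn.le
  have hM1' : (1 : ℝ) ≤ M := by exact_mod_cast hM1
  rw [div_le_iff₀ hsum_pos] at hratio
  calc (Nat.count (constrainedPos N) n : ℝ) ≤ ((M : ℝ) + 1) * (M + 2) := by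
        exact_mod_cast hcount
    _ ≤ 6 * (M : ℝ) ^ 2 := by nlinarith
    _ ≤ ε * ∑ j ∈ Finset.range M, (N j : ℝ) := by linarith
    _ ≤ ε * n := by gcongr

end Constraints

theorem Nat.prod_range_count_nth {M : Type*} [CommMonoid M] {p : ℕ → Prop} [DecidablePred p]
    (hp : (Set.ofPred p).Infinite) (f : ℕ → M) (n : ℕ) :
    ∏ j ∈ Finset.range (Nat.count p n), f (Nat.nth p j) = ∏ k ∈ (Finset.range n).filter p, f k :=
  Finset.prod_nbij' (Nat.nth p) (Nat.count p)
    (fun j hj => by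
      rw [Finset.mem_range] at hj
      simp [Nat.nth_lt_of_lt_count hj, Nat.nth_mem_of_infinite hp])
    (fun k hk => by
      rw [Finset.mem_filter, Finset.mem_range] at hk
      exact Finset.mem_range.2 (Nat.count_strict_mono hk.2 hk.1))
    (fun j _ => Nat.count_nth_of_infinite hp j)
    (fun k hk => Nat.nth_count (Finset.mem_filter.1 hk).2)
    (fun _ _ => rfl)

theorem measure_cylinder_eq_prod {m : ℕ} {ν : Measure (ℕ → Fin m)} {w : Fin m → ENNReal}
    (hν : ∀ (n : ℕ) (aw : Fin n → Fin m),
      ν {t : ℕ → Fin m | ∀ i : Fin n, t (i : ℕ) = aw i} = ∏ i : Fin n, w (aw i))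
    (a : ℕ → Fin m) (n : ℕ) :
    ν (cylinder a n) = ∏ j ∈ Finset.range n, w (a j) := by
  have hset : cylinder a n = {t : ℕ → Fin m | ∀ i : Fin n, t (i : ℕ) = a i} := by
    ext t
    simp only [mem_cylinder_iff, Set.mem_ofPred_eq]
    exact ⟨fun h i => h i i.2, fun h j hj => h ⟨j, hj⟩⟩
  rw [hset, hν n, Fin.prod_univ_eq_prod_range (fun j => w (a j))]

section Filling

variable {m : ℕ}

theorem measurable_prMap (s : ℕ → Fin m) (N : ℕ → ℕ) : Measurable (prMap s N) :=
  measurable_pi_lambda _ fun k => by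
    unfold prMap
    split_ifs <;> fun_prop

theorem prMap_of_constrainedPos {s t : ℕ → Fin m} {N : ℕ → ℕ} (ht : t ∈ sigmaSet s N)
    (a : ℕ → Fin m) {k : ℕ} (hk : constrainedPos N k) : prMap s N a k = t k := by
  obtain ⟨i, hik, hki⟩ := hk
  unfold prMap
  split_ifs with hflip hconstr
  · obtain ⟨j, rfl⟩ := hflip
    exact ((ht j).2).symm
  · rcases Nat.lt_or_ge k (uSeq N i + i + 1) with hlt | hge
    · exact ((ht i).1 k hik (by omega)).symm
    · exact absurd ⟨i, by omega⟩ hflip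
  · exact absurd ⟨i, hik, hki⟩ hconstr

open Classical in
theorem prMap_of_not_constrainedPos (s : ℕ → Fin m) (N : ℕ → ℕ) (a : ℕ → Fin m) {k : ℕ}
    (hk : ¬ constrainedPos N k) :
    prMap s N a k = a (Nat.count (fun j => ¬ constrainedPos N j) k) := by
  have hflip : ¬ flipPos N k := fun ⟨i, hi⟩ => hk ⟨i, by omega, hi.le⟩
  simp only [prMap, if_neg hflip, if_neg hk]

open Classical in
theorem prMap_preimage_cylinder {s t : ℕ → Fin m} {N : ℕ → ℕ} (ht : t ∈ sigmaSet s N)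
    (hinf : {k | ¬ constrainedPos N k}.Infinite) (n : ℕ) :
    prMap s N ⁻¹' cylinder t n =
      cylinder (fun j => t (Nat.nth (fun k => ¬ constrainedPos N k) j))
        (Nat.count (fun k => ¬ constrainedPos N k) n) := by
  ext a
  simp only [Set.mem_preimage, mem_cylinder_iff]
  constructor
  · intro h j hj
    have hfree := Nat.nth_mem_of_infinite hinf j
    rw [← h _ (Nat.nth_lt_of_lt_count hj), prMap_of_not_constrainedPos s N a hfree,
      Nat.count_nth_of_infinite hinf]
  · intro h k hk
    by_cases hck : constrainedPos N k
    · exact prMap_of_constrainedPos ht a hck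
    · rw [prMap_of_not_constrainedPos s N a hck, h _ (Nat.count_strict_mono hck hk),
        Nat.nth_count hck]

open Classical in
theorem measureReal_map_prMap_cylinder {ν : Measure (ℕ → Fin m)} {w : Fin m → ℝ}
    (hw : ∀ i, 0 ≤ w i)
    (hν : ∀ (n : ℕ) (aw : Fin n → Fin m),
      ν {t : ℕ → Fin m | ∀ i : Fin n, t (i : ℕ) = aw i} = ∏ i : Fin n, ENNReal.ofReal (w (aw i)))
    {s t : ℕ → Fin m} {N : ℕ → ℕ} (ht : t ∈ sigmaSet s N) (hN : ∀ n, 0 < N n) (n : ℕ) :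
    (ν.map (prMap s N)).real (cylinder t n) =
      ∏ k ∈ (Finset.range n).filter (fun k => ¬ constrainedPos N k), w (t k) := by
  have hinf := infinite_setOf_not_constrainedPos N hN
  rw [map_measureReal_apply (measurable_prMap s N) (isOpen_cylinder _ t n).measurableSet,
    prMap_preimage_cylinder ht hinf, measureReal_def,
    measure_cylinder_eq_prod (w := fun i => ENNReal.ofReal (w i)) hν,
    Nat.prod_range_count_nth hinf (fun k => ENNReal.ofReal (w (t k))),
    ← ENNReal.ofReal_prod_of_nonneg fun k _ => hw _, ENNReal.toReal_ofReal
      (Finset.prod_nonneg fun k _ => hw _)]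

end Filling

theorem local_dimension_ge_general (m w : ℕ)
    (S : Fin m → EuclideanSpace ℝ (Fin w) → EuclideanSpace ℝ (Fin w))
    (c : Fin m → ℝ) (hc : ∀ i, c i ∈ Set.Ioo (0 : ℝ) 1)
    (hS : ∀ i x y, dist (S i x) (S i y) = c i * dist x y)
    (K : Set (EuclideanSpace ℝ (Fin w))) (hKc : IsCompact K)
    (hSK : ∀ i, S i '' K ⊆ K)
    (hdisj : ∀ i j, i ≠ j → Disjoint (S i '' K) (S j '' K))
    (π : (ℕ → Fin m) → EuclideanSpace ℝ (Fin w))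
    (hπ : ∀ s, (⋂ n, iterComp S s n '' K) = {π s})
    (D : ℝ) (hD : 0 < D)
    (s : ℕ → Fin m) (N : ℕ → ℕ) (hNpos : ∀ n, 0 < N n)
    (hN : Tendsto (fun M : ℕ => (M : ℝ) ^ 2 / ∑ n ∈ Finset.range M, (N n : ℝ))
      atTop (nhds 0))
    (ν : Measure (ℕ → Fin m)) (hνprob : IsProbabilityMeasure ν)
    (hν : ∀ (n : ℕ) (aw : Fin n → Fin m),
      ν {t : ℕ → Fin m | ∀ i : Fin n, t (i : ℕ) = aw i} =
        ∏ i : Fin n, ENNReal.ofReal (c (aw i) ^ D)) :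
    ∀ x ∈ π '' sigmaSet s N,
      D ≤ liminf (fun ρ : ℝ =>
          Real.log ((Measure.map π (Measure.map (prMap s N) ν)) (Metric.ball x ρ)).toReal /
            Real.log ρ)
        (nhdsWithin (0 : ℝ) (Set.Ioi 0)) := by
  classical
  rintro _ ⟨t, ht, rfl⟩
  have : Nonempty (Fin m) := ⟨t 0⟩
  obtain ⟨i₀, hi₀⟩ := Finite.exists_min c
  obtain ⟨i₁, hi₁⟩ := Finite.exists_max c
  have hcyl := measureReal_map_prMap_cylinder (w := fun i => c i ^ D)
    (fun i => Real.rpow_nonneg (hc i).1.le D) hν ht hNpos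
  refine le_liminf_log_measure_ball_div_log hc hS hKc hSK hdisj hπ hD (fun n => ?_) fun d hd => ?_
  · rw [hcyl]
    exact rpow_prod_le_prod_filter_rpow _ _ (fun k => (hc _).1.le) (fun k => (hc _).2.le) hD.le
  · simp only [hcyl]
    exact eventually_prod_filter_not_rpow_le (hc i₀).1 (hc i₁).2 (fun k => hi₀ _) (fun k => hi₁ _)
      (fun ε hε => eventually_count_constrainedPos_le N hNpos hN hε) hD hd.2

/-- With `S_1,…,S_m`, `K`, `π`, `D` as in Statement 1, `s ∈ Σ`, `N` a
sequence of positive integers with `lim_M M²/(Σ_{n=1}^M N_n) = 0`, `ν` the Bernoulli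
measure on `Σ` with weights `(c_1^D, …, c_m^D)` (characterized by its values on
cylinders), `pr : Σ → Σ_N(s)` the filling bijection, and `μ = ν ∘ pr⁻¹ ∘ π⁻¹` the
pushforward to `Λ_N(s) = π(Σ_N(s))`: for every `x ∈ Λ_N(s)`,
`liminf_{ρ→0⁺} log μ(B_ρ(x)) / log ρ ≥ D`. -/
theorem local_dimension_ge (m w : ℕ) (hm : 2 ≤ m)
    (S : Fin m → EuclideanSpace ℝ (Fin w) → EuclideanSpace ℝ (Fin w))
    (c : Fin m → ℝ) (hc : ∀ i, c i ∈ Set.Ioo (0 : ℝ) 1)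
    (hS : ∀ i x y, dist (S i x) (S i y) = c i * dist x y)
    (K : Set (EuclideanSpace ℝ (Fin w))) (hKc : IsCompact K) (hKne : K.Nonempty)
    (hSK : ∀ i, S i '' K ⊆ K)
    (hdisj : ∀ i j, i ≠ j → Disjoint (S i '' K) (S j '' K))
    (π : (ℕ → Fin m) → EuclideanSpace ℝ (Fin w))
    (hπ : ∀ s, (⋂ n, iterComp S s n '' K) = {π s})
    (D : ℝ) (hD : 0 < D) (hDeq : ∑ i, c i ^ D = 1)
    (s : ℕ → Fin m) (N : ℕ → ℕ) (hNpos : ∀ n, 0 < N n)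
    (hN : Tendsto (fun M : ℕ => (M : ℝ) ^ 2 / ∑ n ∈ Finset.range M, (N n : ℝ))
      atTop (nhds 0))
    (ν : Measure (ℕ → Fin m)) (hνprob : IsProbabilityMeasure ν)
    (hν : ∀ (n : ℕ) (aw : Fin n → Fin m),
      ν {t : ℕ → Fin m | ∀ i : Fin n, t (i : ℕ) = aw i} =
        ∏ i : Fin n, ENNReal.ofReal (c (aw i) ^ D)) :
    ∀ x ∈ π '' sigmaSet s N,
      D ≤ liminf (fun ρ : ℝ =>
          Real.log ((Measure.map π (Measure.map (prMap s N) ν)) (Metric.ball x ρ)).toReal /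
            Real.log ρ)
        (nhdsWithin (0 : ℝ) (Set.Ioi 0)) :=
  local_dimension_ge_general m w S c hc hS K hKc hSK hdisj π hπ D hD s N hNpos hN ν hνprob hν

end
end
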